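/- arXiv:2209.07266 — 5 statements merged into one kernel-verified Lean document; each statement's English description precedes it below -/
import Mathlib

section
/- Let 1 < p ≤ 2 and let σ₁ ≥ σ₂ ≥ ⋯ ≥ σ_m > 0. For any ε ∈ (0,1), all m ∈ ℕ and all integers 1 ≤ n < m with n ≤ ε·σ_m²·m^{2/p*}, the random n×m Gaussian matrix G_{n,m} satisfies, with probability at least 1 − ε, sup{ ‖x‖₂ : x ∈ 𝓔_{p,σ}^m, G_{n,m}x = 0 } ≥ σ₁/(1 + σ₁). -/
/-!
Let `K ⊆ ℝ^m` be the row space of `G`, so that `ker G = Kᗮ`, and let `ℓ = ‖P_K e₁‖²` be the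
leverage of the first coordinate. A unit vector `u ∈ Kᗮ` with `⟪u, e₁⟫ = ‖P_{Kᗮ} e₁‖` has
`u₁² = 1 - ℓ`, so `x = a u` with `a = σ₁ / (1 + σ₁)` has `|x₁| ≤ a` and puts Euclidean mass
`a² ℓ` on the other coordinates. By Hölder's inequality between `ℓ_p` and `ℓ_2` on `ℝ^m`, the
tail contributes at most `a^p` to the ellipsoid sum once `ℓ ≤ σ_m² m^{1-2/p}`, and
`(a / σ₁)^p + a^p ≤ 1` because `1 + σ₁^p ≤ (1 + σ₁)^p`; hence `‖x‖₂ = a` is attained on the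
ellipsoid section.

The leverages `‖P_K e_j‖²` sum to `dim K ≤ n`, and permuting the columns of a Gaussian matrix
preserves its law, so all of them have the same mean, at most `n / m`. Markov's inequality then
gives `ℓ < n / (ε m) ≤ σ_m² m^{1-2/p}` with probability at least `1 - ε`.
-/

open MeasureTheory ProbabilityTheory Real
open scoped ENNReal NNReal

noncomputable section

/-- Membership in the `ℓ_p`-ellipsoid `𝓔_{p,σ}^m` with semiaxes `σ₁ ≥ σ₂ ≥ ⋯` (indexed
1-based), for a real exponent `0 < p < ∞`. -/
def memEllR (p : ℝ) {m : ℕ} (σ : ℕ → ℝ) (x : Fin m → ℝ) : Prop :=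
  ∑ i : Fin m, |x i| ^ p / σ ((i : ℕ) + 1) ^ p ≤ 1

/-- The Euclidean norm on `ℝ^m`. -/
def l2norm {m : ℕ} (x : Fin m → ℝ) : ℝ := Real.sqrt (∑ i, (x i) ^ 2)

/-- The law of an `n × m` random matrix with independent standard Gaussian `N(0,1)` entries. -/
def gaussMatrix (n m : ℕ) : Measure (Fin n → Fin m → ℝ) :=
  Measure.pi fun _ => Measure.pi fun _ => gaussianReal 0 1

open scoped InnerProductSpace

open Finset in
theorem Finset.sum_abs_rpow_le_card_rpow_mul {ι : Type*} (s : Finset ι) (f : ι → ℝ) {p : ℝ}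
    (hp : 0 < p) (hp2 : p ≤ 2) :
    ∑ i ∈ s, |f i| ^ p ≤ (#s : ℝ) ^ (1 - p / 2) * (∑ i ∈ s, f i ^ 2) ^ (p / 2) := by
  have hq : 1 ≤ 2 / p := by rw [le_div_iff₀ hp]; linarith
  have hsq : ∀ i, (|f i| ^ p) ^ (2 / p) = f i ^ 2 := fun i => by
    rw [← rpow_mul (abs_nonneg _), mul_div_cancel₀ _ hp.ne', rpow_two, sq_abs]
  have hpower := rpow_sum_le_const_mul_sum_rpow_of_nonneg (s := s) (f := fun i => |f i| ^ p) hq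
    fun i _ => by positivity
  simp only [hsq] at hpower
  calc ∑ i ∈ s, |f i| ^ p = ((∑ i ∈ s, |f i| ^ p) ^ (2 / p)) ^ (p / 2) := by
        rw [← rpow_mul (by positivity), div_mul_div_cancel₀ hp.ne', div_self two_ne_zero, rpow_one]
    _ ≤ ((#s : ℝ) ^ (2 / p - 1) * ∑ i ∈ s, f i ^ 2) ^ (p / 2) :=
        rpow_le_rpow (by positivity) hpower (by positivity)
    _ = (#s : ℝ) ^ (1 - p / 2) * (∑ i ∈ s, f i ^ 2) ^ (p / 2) := by
        rw [mul_rpow (by positivity) (by positivity), ← rpow_mul (Nat.cast_nonneg _)]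
        congr 2
        field_simp

theorem rpow_div_one_add_rpow_le_one {s p : ℝ} (hs : 0 < s) (hp : 1 ≤ p) :
    (s / (1 + s)) ^ p / s ^ p + (s / (1 + s)) ^ p ≤ 1 := by
  have h1s : 0 < 1 + s := by linarith
  rw [div_rpow hs.le h1s.le, div_div_cancel_left' (rpow_pos_of_pos hs p).ne', ← one_div,
    ← add_div, div_le_one (by positivity)]
  simpa using add_rpow_le_rpow_add zero_le_one hs.le hp

theorem rpow_mul_rpow_one_sub_two_div {A m p : ℝ} (hA : 0 ≤ A) (hm : 0 < m) (hp : 0 < p) :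
    m ^ (1 - p / 2) * (A ^ 2 * m ^ (1 - 2 / p)) ^ (p / 2) = A ^ p := by
  rw [mul_rpow (by positivity) (by positivity), ← rpow_natCast, ← rpow_mul hA,
    ← rpow_mul hm.le, mul_left_comm, ← rpow_add hm]
  have : (1 - p / 2) + (1 - 2 / p) * (p / 2) = 0 := by field_simp; ring
  rw [this, rpow_zero, mul_one, Nat.cast_ofNat, mul_div_cancel₀ _ two_ne_zero]

section Ellipsoid

variable {p : ℝ} {m : ℕ} {σ : ℕ → ℝ}

theorem bddAbove_l2norm_image_memEllR (hp : 0 < p) (hσ : ∀ j, 1 ≤ j → j ≤ m → 0 < σ j) :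
    BddAbove (l2norm '' {x : Fin m → ℝ | memEllR p σ x}) := by
  refine ⟨Real.sqrt (∑ i : Fin m, σ ((i : ℕ) + 1) ^ 2), ?_⟩
  rintro _ ⟨x, hx, rfl⟩
  refine Real.sqrt_le_sqrt (Finset.sum_le_sum fun i _ => ?_)
  have hσi := hσ _ (Nat.le_add_left 1 i) i.isLt
  have hterm : |x i| ^ p / σ ((i : ℕ) + 1) ^ p ≤ 1 :=
    (Finset.single_le_sum (f := fun j : Fin m => |x j| ^ p / σ ((j : ℕ) + 1) ^ p)
      (fun j _ => div_nonneg (by positivity) (rpow_nonneg (hσ _ (Nat.le_add_left 1 j) j.isLt).le _))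
      (Finset.mem_univ i)).trans hx
  rw [div_le_one (by positivity), rpow_le_rpow_iff (abs_nonneg _) hσi.le hp] at hterm
  exact sq_abs (x i) ▸ pow_le_pow_left₀ (abs_nonneg _) hterm 2

theorem sum_abs_rpow_div_le (hm : 0 < m) (hp : 0 < p) (hp2 : p ≤ 2)
    (hσ : ∀ j, 1 ≤ j → j ≤ m → 0 < σ j) (hσanti : ∀ i j, 1 ≤ i → i ≤ j → j ≤ m → σ j ≤ σ i) (s : Finset (Fin m)) (x : Fin m → ℝ) :
    ∑ i ∈ s, |x i| ^ p / σ ((i : ℕ) + 1) ^ p ≤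
      (m : ℝ) ^ (1 - p / 2) * (∑ i ∈ s, x i ^ 2) ^ (p / 2) / σ m ^ p := by
  have hσm : 0 < σ m := hσ m hm le_rfl
  calc ∑ i ∈ s, |x i| ^ p / σ ((i : ℕ) + 1) ^ p ≤ ∑ i ∈ s, |x i| ^ p / σ m ^ p := by
        gcongr with i
        exact hσanti _ m (Nat.le_add_left 1 i) i.isLt le_rfl
    _ = (∑ i ∈ s, |x i| ^ p) / σ m ^ p := (Finset.sum_div ..).symm
    _ ≤ _ := by
        gcongr
        refine (s.sum_abs_rpow_le_card_rpow_mul x hp hp2).trans ?_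
        gcongr
        · linarith
        · simpa using s.card_le_univ

theorem memEllR_of_sq_le (hm : 0 < m) (hp : 1 ≤ p) (hp2 : p ≤ 2)
    (hσ : ∀ j, 1 ≤ j → j ≤ m → 0 < σ j) (hσanti : ∀ i j, 1 ≤ i → i ≤ j → j ≤ m → σ j ≤ σ i)
    {x : Fin m → ℝ} (hhead : x ⟨0, hm⟩ ^ 2 ≤ (σ 1 / (1 + σ 1)) ^ 2)
    (htail : ∑ j ∈ Finset.univ.erase ⟨0, hm⟩, x j ^ 2 ≤
      (σ 1 / (1 + σ 1) * σ m) ^ 2 * (m : ℝ) ^ (1 - 2 / p)) :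
    memEllR p σ x := by
  set a := σ 1 / (1 + σ 1)
  have hσ1 : 0 < σ 1 := hσ 1 le_rfl hm
  have hσm : 0 < σ m := hσ m hm le_rfl
  have ha : 0 < a := by positivity
  have hp0 : 0 < p := by linarith
  have hhead' : |x ⟨0, hm⟩| ^ p / σ 1 ^ p ≤ a ^ p / σ 1 ^ p := by
    gcongr
    exact abs_le_of_sq_le_sq hhead ha.le
  have htail' : ∑ j ∈ Finset.univ.erase ⟨0, hm⟩, |x j| ^ p / σ ((j : ℕ) + 1) ^ p ≤ a ^ p :=
    calc _ ≤ (m : ℝ) ^ (1 - p / 2) * (∑ j ∈ Finset.univ.erase ⟨0, hm⟩, x j ^ 2) ^ (p / 2) /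
            σ m ^ p := sum_abs_rpow_div_le hm hp0 hp2 hσ hσanti _ x
      _ ≤ (m : ℝ) ^ (1 - p / 2) * ((a * σ m) ^ 2 * (m : ℝ) ^ (1 - 2 / p)) ^ (p / 2) /
            σ m ^ p := by gcongr
      _ = a ^ p := by
        rw [rpow_mul_rpow_one_sub_two_div (by positivity) (by exact_mod_cast hm) hp0,
          mul_rpow ha.le hσm.le, mul_div_cancel_right₀ _ (rpow_pos_of_pos hσm p).ne']
  unfold memEllR
  rw [← Finset.add_sum_erase _ _ (Finset.mem_univ ⟨0, hm⟩)]
  linarith [rpow_div_one_add_rpow_le_one hσ1 hp]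

end Ellipsoid

section OrthogonalProjection

variable {𝕜 E : Type*} [RCLike 𝕜] [NormedAddCommGroup E] [InnerProductSpace 𝕜 E]

theorem Submodule.sum_norm_sq_starProjection_eq_finrank {ι : Type*} [Fintype ι]
    (K : Submodule 𝕜 E) [FiniteDimensional 𝕜 K] (b : OrthonormalBasis ι 𝕜 E) :
    ∑ j, ‖K.starProjection (b j)‖ ^ 2 = Module.finrank 𝕜 K := by
  let c := stdOrthonormalBasis 𝕜 K
  have hparseval : ∀ v : E, ‖K.starProjection v‖ ^ 2 = ∑ k, ‖⟪(c k : E), v⟫_𝕜‖ ^ 2 := fun v => by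
    rw [Submodule.starProjection_apply, Submodule.norm_coe,
      ← c.sum_sq_norm_inner_right (K.orthogonalProjectionOnto v)]
    simp only [Submodule.inner_orthogonalProjectionOnto_eq_of_mem_left]
  simp only [hparseval]
  rw [Finset.sum_comm]
  simp only [b.sum_sq_norm_inner_left, Submodule.norm_coe, c.orthonormal.1, one_pow,
    Finset.sum_const, Finset.card_univ, nsmul_eq_mul, mul_one, Fintype.card_fin]

theorem Submodule.inner_starProjection_of_mem (K : Submodule 𝕜 E) [K.HasOrthogonalProjection]
    {u : E} (hu : u ∈ K) (v : E) : ⟪u, K.starProjection v⟫_𝕜 = ⟪u, v⟫_𝕜 := by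
  rw [← K.inner_starProjection_left_eq_right, K.starProjection_eq_self_iff.mpr hu]

end OrthogonalProjection

section RealOrthogonalProjection

variable {E : Type*} [NormedAddCommGroup E] [InnerProductSpace ℝ E]

theorem Submodule.real_inner_starProjection_self (K : Submodule ℝ E) [K.HasOrthogonalProjection]
    (v : E) : ⟪K.starProjection v, v⟫_ℝ = ‖K.starProjection v‖ ^ 2 := by
  rw [← K.inner_starProjection_of_mem (K.starProjection_apply_mem v), real_inner_self_eq_norm_sq]

theorem Submodule.inner_sq_div_norm_sq_le_norm_sq_starProjection (K : Submodule ℝ E)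
    [K.HasOrthogonalProjection] {u : E} (hu : u ∈ K) (v : E) :
    ⟪u, v⟫_ℝ ^ 2 / ‖u‖ ^ 2 ≤ ‖K.starProjection v‖ ^ 2 := by
  refine div_le_of_le_mul₀ (sq_nonneg _) (sq_nonneg _) ?_
  rw [← K.inner_starProjection_of_mem hu, ← mul_pow, mul_comm, ← sq_abs]
  exact pow_le_pow_left₀ (abs_nonneg _) (abs_real_inner_le_norm _ _) 2

theorem Submodule.norm_sq_starProjection_eq_iSup (K : Submodule ℝ E) [K.HasOrthogonalProjection]
    (v : E) : ‖K.starProjection v‖ ^ 2 = ⨆ u : K, ⟪(u : E), v⟫_ℝ ^ 2 / ‖(u : E)‖ ^ 2 := by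
  have hbound (u : K) := K.inner_sq_div_norm_sq_le_norm_sq_starProjection u.2 v
  refine le_antisymm ?_ (ciSup_le hbound)
  refine le_ciSup_of_le ⟨_, Set.forall_mem_range.2 hbound⟩ (K.orthogonalProjectionOnto v) ?_
  rw [← K.starProjection_apply, K.real_inner_starProjection_self, sq (‖K.starProjection v‖ ^ 2),
    mul_self_div_self]

theorem lowerSemicontinuous_inner_sq_div_norm_sq (v : E) :
    LowerSemicontinuous fun u : E => ⟪u, v⟫_ℝ ^ 2 / ‖u‖ ^ 2 := by
  intro u
  rcases eq_or_ne u 0 with rfl | hu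
  · -- the quotient takes its least value `0 / 0 = 0` at `u = 0`
    intro y hy
    simp only [inner_zero_left, norm_zero, zero_pow two_ne_zero, div_zero] at hy
    exact Filter.Eventually.of_forall fun w => hy.trans_le (by positivity)
  · refine ContinuousAt.lowerSemicontinuousAt ?_
    exact ((continuous_id.inner continuous_const).pow 2).continuousAt.div
      (continuous_norm.pow 2).continuousAt (by simpa using hu)

theorem Submodule.exists_norm_eq_one_inner_eq_norm_starProjection (L : Submodule ℝ E)
    [L.HasOrthogonalProjection] (hL : L ≠ ⊥) (v : E) :
    ∃ u ∈ L, ‖u‖ = 1 ∧ ⟪u, v⟫_ℝ = ‖L.starProjection v‖ := by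
  by_cases h : L.starProjection v = 0
  · obtain ⟨w, hw, hw0⟩ := (Submodule.ne_bot_iff L).1 hL
    refine ⟨‖w‖⁻¹ • w, L.smul_mem _ hw, norm_smul_inv_norm hw0, ?_⟩
    rw [← L.inner_starProjection_of_mem (L.smul_mem _ hw), h, inner_zero_right, norm_zero]
  · refine ⟨‖L.starProjection v‖⁻¹ • L.starProjection v,
      L.smul_mem _ (L.starProjection_apply_mem v), norm_smul_inv_norm h, ?_⟩
    rw [real_inner_smul_left, L.real_inner_starProjection_self, sq, inv_mul_cancel_left₀]
    exact norm_ne_zero_iff.mpr h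

end RealOrthogonalProjection

section Leverage

variable {n m : ℕ}

def rowSpan (G : Fin n → Fin m → ℝ) : Submodule ℝ (EuclideanSpace ℝ (Fin m)) :=
  Submodule.span ℝ (Set.range fun i => WithLp.toLp 2 (G i))

def leverage (G : Fin n → Fin m → ℝ) (j : Fin m) : ℝ :=
  ‖(rowSpan G).starProjection (EuclideanSpace.single j 1)‖ ^ 2

theorem leverage_nonneg (G : Fin n → Fin m → ℝ) (j : Fin m) : 0 ≤ leverage G j := by
  unfold leverage; positivity

theorem sum_smul_mem_rowSpan (G : Fin n → Fin m → ℝ) (c : Fin n → ℝ) :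
    ∑ i, c i • WithLp.toLp 2 (G i) ∈ rowSpan G :=
  Submodule.sum_smul_mem _ _ fun i _ => Submodule.subset_span ⟨i, rfl⟩

theorem finrank_rowSpan_le (G : Fin n → Fin m → ℝ) : Module.finrank ℝ (rowSpan G) ≤ n :=
  (finrank_range_le_card (R := ℝ) _).trans_eq (Fintype.card_fin n)

theorem sum_leverage_le (G : Fin n → Fin m → ℝ) : ∑ j, leverage G j ≤ n := by
  have h := (rowSpan G).sum_norm_sq_starProjection_eq_finrank (EuclideanSpace.basisFun (Fin m) ℝ)
  simp only [EuclideanSpace.basisFun_apply] at h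
  simp only [leverage, h]
  exact_mod_cast finrank_rowSpan_le G

theorem sum_mul_eq_zero_of_mem_orthogonal_rowSpan {G : Fin n → Fin m → ℝ}
    {x : EuclideanSpace ℝ (Fin m)} (hx : x ∈ (rowSpan G)ᗮ) (i : Fin n) :
    ∑ j, G i j * x j = 0 := by
  have h := (Submodule.mem_orthogonal' _ _).mp hx _ (Submodule.subset_span ⟨i, rfl⟩)
  simpa [PiLp.inner_apply, mul_comm] using h

theorem leverage_eq_iSup (G : Fin n → Fin m → ℝ) (j : Fin m) :
    leverage G j = ⨆ c : Fin n → ℝ,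
      ⟪∑ i, c i • WithLp.toLp 2 (G i), EuclideanSpace.single j 1⟫_ℝ ^ 2 /
        ‖∑ i, c i • WithLp.toLp 2 (G i)‖ ^ 2 := by
  have hsurj : Function.Surjective fun c : Fin n → ℝ =>
      (⟨∑ i, c i • WithLp.toLp 2 (G i), sum_smul_mem_rowSpan G c⟩ : rowSpan G) := by
    rintro ⟨u, hu⟩
    obtain ⟨c, rfl⟩ := (Submodule.mem_span_range_iff_exists_fun ℝ).mp hu
    exact ⟨c, rfl⟩
  rw [leverage, Submodule.norm_sq_starProjection_eq_iSup, ← hsurj.iSup_comp]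

theorem measurable_leverage (j : Fin m) : Measurable fun G : Fin n → Fin m → ℝ => leverage G j := by
  simp only [leverage_eq_iSup]
  refine LowerSemicontinuous.measurable (lowerSemicontinuous_ciSup (fun G => ⟨leverage G j, ?_⟩)
    fun c => (lowerSemicontinuous_inner_sq_div_norm_sq _).comp (by fun_prop))
  exact Set.forall_mem_range.2 fun c =>
    (rowSpan G).inner_sq_div_norm_sq_le_norm_sq_starProjection (sum_smul_mem_rowSpan G c) _

theorem leverage_comp_perm (G : Fin n → Fin m → ℝ) (τ : Equiv.Perm (Fin m)) (j : Fin m) :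
    leverage (fun i => G i ∘ τ) j = leverage G (τ j) := by
  let φ := LinearIsometryEquiv.piLpCongrLeft 2 ℝ ℝ τ.symm
  have hspan : rowSpan (fun i => G i ∘ τ) = (rowSpan G).map (φ.toLinearEquiv : _ →ₗ[ℝ] _) := by
    rw [rowSpan, rowSpan, Submodule.map_span, ← Set.range_comp]
    congr 1
  simp only [leverage, hspan, Submodule.starProjection_map_apply, LinearIsometryEquiv.norm_map, φ,
    LinearIsometryEquiv.piLpCongrLeft_symm, Equiv.symm_symm, EuclideanSpace.piLpCongrLeft_single]

end Leverage

theorem ofReal_one_sub_le_measure_lt {Ω : Type*} [MeasurableSpace Ω] {μ : Measure Ω}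
    [IsProbabilityMeasure μ] {f : Ω → ℝ} (hf : Measurable f) {ε c : ℝ} (hε : 0 ≤ ε) (hc : 0 < c)
    (hmean : ∫⁻ ω, ENNReal.ofReal (f ω) ∂μ ≤ ENNReal.ofReal (ε * c)) :
    ENNReal.ofReal (1 - ε) ≤ μ {ω | f ω < c} := by
  have hc' : ENNReal.ofReal c ≠ 0 := (ENNReal.ofReal_pos.mpr hc).ne'
  have hmarkov : μ {ω | ENNReal.ofReal c ≤ ENNReal.ofReal (f ω)} ≤ ENNReal.ofReal ε := by
    refine (meas_ge_le_lintegral_div hf.ennreal_ofReal.aemeasurable hc'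
      ENNReal.ofReal_ne_top).trans ?_
    rw [ENNReal.div_le_iff hc' ENNReal.ofReal_ne_top, ← ENNReal.ofReal_mul hε]
    exact hmean
  have hS : MeasurableSet {ω | ENNReal.ofReal c ≤ ENNReal.ofReal (f ω)} :=
    measurableSet_le measurable_const hf.ennreal_ofReal
  calc ENNReal.ofReal (1 - ε) = 1 - ENNReal.ofReal ε := by
        rw [ENNReal.ofReal_sub _ hε, ENNReal.ofReal_one]
    _ ≤ μ {ω | ENNReal.ofReal c ≤ ENNReal.ofReal (f ω)}ᶜ := by
        rw [prob_compl_eq_one_sub hS]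
        exact tsub_le_tsub_left hmarkov 1
    _ ≤ μ {ω | f ω < c} := measure_mono fun ω hω => by
        simpa [ENNReal.ofReal_lt_ofReal_iff hc] using hω


section Gaussian

variable {n m : ℕ}

instance : IsProbabilityMeasure (gaussMatrix n m) := by
  unfold gaussMatrix; infer_instance

theorem measurePreserving_gaussMatrix_comp_perm (τ : Equiv.Perm (Fin m)) :
    MeasurePreserving (fun G : Fin n → Fin m → ℝ => fun i => G i ∘ τ)
      (gaussMatrix n m) (gaussMatrix n m) := by
  have hrow : MeasurePreserving (fun x : Fin m → ℝ => x ∘ τ)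
      (Measure.pi fun _ => gaussianReal 0 1) (Measure.pi fun _ => gaussianReal 0 1) := by
    convert measurePreserving_piCongrLeft (fun _ : Fin m => gaussianReal 0 1) τ.symm using 1
    ext x k
    simp [MeasurableEquiv.coe_piCongrLeft, Equiv.piCongrLeft_apply]
  exact measurePreserving_pi _ _ fun _ => hrow

theorem lintegral_leverage_eq (j k : Fin m) :
    ∫⁻ G, ENNReal.ofReal (leverage G j) ∂gaussMatrix n m =
      ∫⁻ G, ENNReal.ofReal (leverage G k) ∂gaussMatrix n m := by
  rw [← (measurePreserving_gaussMatrix_comp_perm (Equiv.swap k j)).lintegral_comp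
    (measurable_leverage k).ennreal_ofReal]
  simp only [leverage_comp_perm, Equiv.swap_apply_left]

theorem natCast_mul_lintegral_leverage_le (j : Fin m) :
    m * ∫⁻ G, ENNReal.ofReal (leverage G j) ∂gaussMatrix n m ≤ n := by
  calc (m : ℝ≥0∞) * ∫⁻ G, ENNReal.ofReal (leverage G j) ∂gaussMatrix n m
      = ∑ k : Fin m, ∫⁻ G, ENNReal.ofReal (leverage G k) ∂gaussMatrix n m := by
        simp [lintegral_leverage_eq _ j]
    _ = ∫⁻ G, ENNReal.ofReal (∑ k, leverage G k) ∂gaussMatrix n m := by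
        rw [← lintegral_finsetSum _ fun k _ => (measurable_leverage k).ennreal_ofReal]
        exact lintegral_congr fun G =>
          (ENNReal.ofReal_sum_of_nonneg fun k _ => leverage_nonneg G k).symm
    _ ≤ ∫⁻ _, ENNReal.ofReal n ∂gaussMatrix n m :=
        lintegral_mono fun G => ENNReal.ofReal_le_ofReal (sum_leverage_le G)
    _ = n := by simp

theorem ofReal_one_sub_le_gaussMatrix_leverage_lt (hn : 0 < n) {ε : ℝ} (hε : 0 < ε) (j : Fin m) :
    ENNReal.ofReal (1 - ε) ≤ gaussMatrix n m {G | leverage G j < n / (ε * m)} := by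
  have hm : (0 : ℝ) < m := by exact_mod_cast j.pos
  refine ofReal_one_sub_le_measure_lt (measurable_leverage j) hε.le (by positivity) ?_
  have hεc : ε * (n / (ε * m)) = n / m := by field_simp
  rw [hεc, ENNReal.ofReal_div_of_pos hm, ENNReal.ofReal_natCast,
    ENNReal.ofReal_natCast, ENNReal.le_div_iff_mul_le (by simp [j.pos.ne']) (by simp), mul_comm]
  exact natCast_mul_lintegral_leverage_le j

end Gaussian

section Construction

variable {n m : ℕ} {p : ℝ} {σ : ℕ → ℝ}

theorem exists_kernel_vector_sq_apply_eq (hnm : n < m) (G : Fin n → Fin m → ℝ) (j : Fin m)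
    (a : ℝ) : ∃ x : Fin m → ℝ, (∀ i, ∑ k, G i k * x k = 0) ∧ ∑ k, x k ^ 2 = a ^ 2 ∧
      x j ^ 2 = a ^ 2 * (1 - leverage G j) := by
  set e : EuclideanSpace ℝ (Fin m) := EuclideanSpace.single j 1
  have hK : (rowSpan G)ᗮ ≠ ⊥ := by
    rw [Ne, Submodule.orthogonal_eq_bot_iff]
    intro htop
    have := finrank_rowSpan_le G
    rw [htop, finrank_top, finrank_euclideanSpace_fin] at this
    omega
  obtain ⟨u, huK, hu1, hue⟩ := (rowSpan G)ᗮ.exists_norm_eq_one_inner_eq_norm_starProjection hK e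
  refine ⟨fun k => a * u k, fun i => ?_, ?_, ?_⟩
  · simp only [mul_left_comm _ a, ← Finset.mul_sum,
      sum_mul_eq_zero_of_mem_orthogonal_rowSpan huK i, mul_zero]
  · simp only [mul_pow, ← Finset.mul_sum, ← EuclideanSpace.real_norm_sq_eq, hu1, one_pow, mul_one]
  · have hpyth := (rowSpan G).norm_sq_eq_add_norm_sq_starProjection e
    rw [PiLp.norm_single, norm_one, one_pow, ← hue] at hpyth
    simp only [leverage, e, mul_pow, EuclideanSpace.inner_single_right, one_mul,
      starRingEnd_apply, star_trivial] at hpyth ⊢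
    linear_combination (-a ^ 2) * hpyth

theorem le_sSup_of_leverage_le (hp : 1 ≤ p) (hp2 : p ≤ 2)
    (hσ : ∀ j, 1 ≤ j → j ≤ m → 0 < σ j) (hσanti : ∀ i j, 1 ≤ i → i ≤ j → j ≤ m → σ j ≤ σ i)
    (hnm : n < m) (G : Fin n → Fin m → ℝ)
    (hG : leverage G ⟨0, Nat.zero_lt_of_lt hnm⟩ ≤ σ m ^ 2 * (m : ℝ) ^ (1 - 2 / p)) :
    σ 1 / (1 + σ 1) ≤
      sSup (l2norm '' {x : Fin m → ℝ | memEllR p σ x ∧ ∀ i, ∑ j, G i j * x j = 0}) := by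
  have hm := Nat.zero_lt_of_lt hnm
  set a := σ 1 / (1 + σ 1)
  have ha : 0 < a := by have := hσ 1 le_rfl hm; positivity
  obtain ⟨x, hker, hnorm, hhead⟩ := exists_kernel_vector_sq_apply_eq hnm G ⟨0, hm⟩ a
  have htail : ∑ j ∈ Finset.univ.erase ⟨0, hm⟩, x j ^ 2 = a ^ 2 * leverage G ⟨0, hm⟩ := by
    rw [← Finset.add_sum_erase _ _ (Finset.mem_univ ⟨0, hm⟩), hhead] at hnorm
    linarith
  have hmem : memEllR p σ x := by
    refine memEllR_of_sq_le hm hp hp2 hσ hσanti ?_ ?_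
    · rw [hhead]
      exact mul_le_of_le_one_right (sq_nonneg a) (by linarith [leverage_nonneg G ⟨0, hm⟩])
    · rw [htail, mul_pow, mul_assoc]
      gcongr
  have hl2 : l2norm x = a := by rw [l2norm, hnorm, sqrt_sq ha.le]
  rw [← hl2]
  exact le_csSup ((bddAbove_l2norm_image_memEllR (by linarith) hσ).mono
    (Set.image_mono fun y hy => hy.1)) ⟨x, ⟨hmem, hker⟩, rfl⟩

end Construction

theorem stmt5 :
    ∀ p : ℝ, 1 < p → p ≤ 2 →
    ∀ ε : ℝ, 0 < ε → ε < 1 →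
    ∀ (m : ℕ) (σ : ℕ → ℝ),
      (∀ j : ℕ, 1 ≤ j → j ≤ m → 0 < σ j) →
      (∀ i j : ℕ, 1 ≤ i → i ≤ j → j ≤ m → σ j ≤ σ i) →
    ∀ n : ℕ, 1 ≤ n → n < m →
    ∀ q : ℝ, 1 / p + 1 / q = 1 →
      (n : ℝ) ≤ ε * σ m ^ 2 * (m : ℝ) ^ (2 / q) →
      ENNReal.ofReal (1 - ε) ≤
        gaussMatrix n m {G | σ 1 / (1 + σ 1) ≤
          sSup (l2norm '' {x : Fin m → ℝ |
            memEllR p σ x ∧ ∀ i, ∑ j, G i j * x j = 0})} := by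
  intro p hp hp2 ε hε _ m σ hσ hσanti n hn hnm q hq hmn
  have hm : (0 : ℝ) < m := by exact_mod_cast Nat.zero_lt_of_lt hnm
  have hq2 : 2 / q = 1 + (1 - 2 / p) := by
    rw [div_eq_mul_one_div 2 q, eq_sub_of_add_eq' hq]
    ring
  have hthreshold : n / (ε * m) ≤ σ m ^ 2 * (m : ℝ) ^ (1 - 2 / p) := by
    rw [div_le_iff₀ (by positivity)]
    calc (n : ℝ) ≤ ε * σ m ^ 2 * (m : ℝ) ^ (2 / q) := hmn
      _ = σ m ^ 2 * (m : ℝ) ^ (1 - 2 / p) * (ε * m) := by rw [hq2, rpow_add hm, rpow_one]; ring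
  refine (ofReal_one_sub_le_gaussMatrix_leverage_lt hn hε ⟨0, Nat.zero_lt_of_lt hnm⟩).trans
    (measure_mono fun G hG => ?_)
  exact le_sSup_of_leverage_le hp.le hp2 hσ hσanti hnm G (hG.trans_le hthreshold).le
end
end

section
/- Let F and G be real vector spaces equipped with quasi-norms ‖·‖_F and ‖·‖_G, with quasi-triangle constants C_F ≥ 1 and C_G ≥ 1 respectively. Let S : F → G be a linear map with sup_{‖f‖_F ≤ 1} ‖S f‖_G < ∞, let n ∈ ℕ, let L₁, …, L_n : F → ℝ be linear functionals, and write N(f) = (L₁(f), …, L_n(f)) ∈ ℝⁿ. Then C_G^{−1} · sup{ ‖S f‖_G : ‖f‖_F ≤ 1, N(f) = 0 } ≤ inf_{φ : ℝⁿ → G} sup_{‖f‖_F ≤ 1} ‖S f − φ(N(f))‖_G ≤ 2·C_F · sup{ ‖S f‖_G : ‖f‖_F ≤ 1, N(f) = 0 }, where the infimum is over all (not necessarily linear or continuous) maps φ : ℝⁿ → G. -/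
/-!
Lower bound: for `f` in the kernel of `N`, the elements `f` and `-f` carry the same information,
so any reconstruction `φ` returns the same `a` for both, and `2 • S f = (S f - a) - (S (-f) - a)`
bounds `‖S f‖_G` by `C_G` times the worst-case error.
Upper bound: let `φ (N f)` be `S f₀` for any `f₀` in the unit ball with `N f₀ = N f`; then `f - f₀`
lies in the kernel of `N` and has quasi-norm at most `2 C_F`.
-/

noncomputable section

section QuasiNorm

variable {E : Type*} [AddCommGroup E] [Module ℝ E] {p : E → ℝ} {C : ℝ}

theorem quasiNorm_zero (hsmul : ∀ (c : ℝ) (x : E), p (c • x) = |c| * p x) : p 0 = 0 := by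
  simpa using hsmul 0 0

theorem quasiNorm_neg (hsmul : ∀ (c : ℝ) (x : E), p (c • x) = |c| * p x) (x : E) :
    p (-x) = p x := by
  simpa using hsmul (-1) x

theorem quasiNorm_sub_le_two_mul (hC : 0 ≤ C) (hsmul : ∀ (c : ℝ) (x : E), p (c • x) = |c| * p x)
    (htri : ∀ x y : E, p (x + y) ≤ C * (p x + p y)) {x y : E} (hx : p x ≤ 1) (hy : p y ≤ 1) :
    p (x - y) ≤ 2 * C := by
  calc p (x - y) = p (x + -y) := by rw [sub_eq_add_neg]
    _ ≤ C * (p x + p (-y)) := htri x (-y)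
    _ ≤ C * 2 := by rw [quasiNorm_neg hsmul]; gcongr; linarith
    _ = 2 * C := mul_comm C 2

theorem two_mul_le_quasiNorm_sub_add (hsmul : ∀ (c : ℝ) (x : E), p (c • x) = |c| * p x)
    (htri : ∀ x y : E, p (x + y) ≤ C * (p x + p y)) (x a : E) :
    2 * p x ≤ C * (p (x - a) + p (-x - a)) := by
  have hsum : x - a + -(-x - a) = (2 : ℝ) • x := by module
  have := htri (x - a) (-(-x - a))
  rwa [hsum, hsmul, quasiNorm_neg hsmul, abs_two] at this

end QuasiNorm

section Recovery

variable {F G ι : Type*} [AddCommGroup F] [Module ℝ F] [AddCommGroup G] [Module ℝ G]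
  {nF : F → ℝ} {nG : G → ℝ} {CF CG : ℝ} {S : F →ₗ[ℝ] G} {L : ι → F →ₗ[ℝ] ℝ}

variable (nF nG S L) in
def kernelRadius : ℝ :=
  sSup {r : ℝ | ∃ f : F, nF f ≤ 1 ∧ (∀ i, L i f = 0) ∧ r = nG (S f)}

theorem le_kernelRadius (hS : ∃ M : ℝ, ∀ f : F, nF f ≤ 1 → nG (S f) ≤ M) {f : F}
    (hf : nF f ≤ 1) (hLf : ∀ i, L i f = 0) : nG (S f) ≤ kernelRadius nF nG S L := by
  obtain ⟨M, hM⟩ := hS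
  exact le_csSup ⟨M, fun r ⟨g, hg, _, hr⟩ => hr ▸ hM g hg⟩ ⟨f, hf, hLf, rfl⟩

theorem kernelRadius_le (hFsmul : ∀ (c : ℝ) (f : F), nF (c • f) = |c| * nF f) {r : ℝ}
    (h : ∀ f : F, nF f ≤ 1 → (∀ i, L i f = 0) → nG (S f) ≤ r) :
    kernelRadius nF nG S L ≤ r := by
  have hzero : nF 0 ≤ 1 := by rw [quasiNorm_zero hFsmul]; exact zero_le_one
  refine csSup_le ⟨_, 0, hzero, fun i => map_zero (L i), rfl⟩ ?_
  rintro _ ⟨f, hf, hLf, rfl⟩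
  exact h f hf hLf

theorem le_mul_kernelRadius (hFsmul : ∀ (c : ℝ) (f : F), nF (c • f) = |c| * nF f)
    (hGsmul : ∀ (c : ℝ) (g : G), nG (c • g) = |c| * nG g)
    (hS : ∃ M : ℝ, ∀ f : F, nF f ≤ 1 → nG (S f) ≤ M) {t : ℝ} (ht : 0 < t) {f : F}
    (hf : nF f ≤ t) (hLf : ∀ i, L i f = 0) : nG (S f) ≤ t * kernelRadius nF nG S L := by
  have hscaled : nF (t⁻¹ • f) ≤ 1 := by
    rw [hFsmul, abs_of_pos (inv_pos.2 ht), inv_mul_le_iff₀ ht, mul_one]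
    exact hf
  have hLscaled : ∀ i, L i (t⁻¹ • f) = 0 := fun i => by rw [map_smul, hLf, smul_zero]
  calc nG (S f) = t * nG (S (t⁻¹ • f)) := by
        rw [map_smul, hGsmul, abs_of_pos (inv_pos.2 ht), mul_inv_cancel_left₀ ht.ne']
    _ ≤ t * kernelRadius nF nG S L := by
        gcongr; exact le_kernelRadius hS hscaled hLscaled

theorem kernelRadius_le_mul_of_recovery (hCG : 0 ≤ CG) (hFsmul : ∀ (c : ℝ) (f : F), nF (c • f) = |c| * nF f)
    (hGsmul : ∀ (c : ℝ) (g : G), nG (c • g) = |c| * nG g)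
    (hGtri : ∀ g g' : G, nG (g + g') ≤ CG * (nG g + nG g'))
    (φ : (ι → ℝ) → G) {r : ℝ} (hr : ∀ f : F, nF f ≤ 1 → nG (S f - φ (fun i => L i f)) ≤ r) :
    kernelRadius nF nG S L ≤ CG * r := by
  refine kernelRadius_le hFsmul fun f hf hLf => ?_
  have hneg : nF (-f) ≤ 1 := by rwa [quasiNorm_neg hFsmul]
  have hsame : (fun i => L i (-f)) = fun i => L i f := funext fun i => by simp [hLf i]
  have herr := hr (-f) hneg
  rw [hsame, map_neg] at herr
  have htwo := two_mul_le_quasiNorm_sub_add hGsmul hGtri (S f) (φ fun i => L i f)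
  have : CG * (nG (S f - φ fun i => L i f) + nG (-S f - φ fun i => L i f)) ≤ CG * (r + r) := by
    gcongr; exact hr f hf
  linarith

theorem exists_recovery_le_mul_kernelRadius (hCF : 0 < CF)
    (hFsmul : ∀ (c : ℝ) (f : F), nF (c • f) = |c| * nF f)
    (hFtri : ∀ f g : F, nF (f + g) ≤ CF * (nF f + nF g))
    (hGsmul : ∀ (c : ℝ) (g : G), nG (c • g) = |c| * nG g)
    (hS : ∃ M : ℝ, ∀ f : F, nF f ≤ 1 → nG (S f) ≤ M) :
    ∃ φ : (ι → ℝ) → G, ∀ f : F, nF f ≤ 1 →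
      nG (S f - φ (fun i => L i f)) ≤ 2 * CF * kernelRadius nF nG S L := by
  let N : F → ι → ℝ := fun f i => L i f
  refine ⟨fun a => S (Function.invFunOn N {f | nF f ≤ 1} a), fun f hf => ?_⟩
  have hex : ∃ g ∈ {f | nF f ≤ 1}, N g = N f := ⟨f, hf, rfl⟩
  set f₀ := Function.invFunOn N {f | nF f ≤ 1} (N f)
  have hf₀ : nF f₀ ≤ 1 := Function.invFunOn_mem hex
  have hNf₀ : N f₀ = N f := Function.invFunOn_eq hex
  have hker : ∀ i, L i (f - f₀) = 0 := fun i => by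
    rw [map_sub, sub_eq_zero]; exact (congrFun hNf₀ i).symm
  rw [← map_sub]
  exact le_mul_kernelRadius hFsmul hGsmul hS (by positivity)
    (quasiNorm_sub_le_two_mul hCF.le hFsmul hFtri hf hf₀) hker

end Recovery

theorem stmt6_general (F G : Type*) [AddCommGroup F] [Module ℝ F] [AddCommGroup G] [Module ℝ G]
    (nF : F → ℝ) (nG : G → ℝ) (CF CG : ℝ) (hCF : 1 ≤ CF) (hCG : 1 ≤ CG)
    -- `nF` is a quasi-norm on `F` with constant `C_F`:
    (hFsmul : ∀ (c : ℝ) (f : F), nF (c • f) = |c| * nF f)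
    (hFtri : ∀ f g : F, nF (f + g) ≤ CF * (nF f + nF g))
    -- `nG` is a quasi-norm on `G` with constant `C_G`:
    (hGsmul : ∀ (c : ℝ) (g : G), nG (c • g) = |c| * nG g)
    (hGtri : ∀ g g' : G, nG (g + g') ≤ CG * (nG g + nG g'))
    -- `S` is a bounded linear map:
    (S : F →ₗ[ℝ] G)
    (hS : ∃ M : ℝ, ∀ f : F, nF f ≤ 1 → nG (S f) ≤ M)
    -- the information map `N = (L₁, …, L_n)`:
    (n : ℕ) (L : Fin n → F →ₗ[ℝ] ℝ) :
    -- the radius of the trace of the unit ball on the kernel of the information map: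
    ∀ R : ℝ, R = sSup {r : ℝ | ∃ f : F, nF f ≤ 1 ∧ (∀ i, L i f = 0) ∧ r = nG (S f)} →
      -- lower bound: every worst-case-error bound `r` of any reconstruction map `φ`
      -- satisfies `C_G⁻¹ · R ≤ r`:
      (∀ φ : (Fin n → ℝ) → G, ∀ r : ℝ,
          (∀ f : F, nF f ≤ 1 → nG (S f - φ (fun i => L i f)) ≤ r) → CG⁻¹ * R ≤ r) ∧
      -- upper bound: some reconstruction map `φ` has worst-case error at most `2·C_F·R`:
      (∃ φ : (Fin n → ℝ) → G, ∀ f : F, nF f ≤ 1 →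
          nG (S f - φ (fun i => L i f)) ≤ 2 * CF * R) := by
  rintro R rfl
  have hCG₀ : 0 < CG := zero_lt_one.trans_le hCG
  refine ⟨fun φ r hr => ?_,
    exists_recovery_le_mul_kernelRadius (zero_lt_one.trans_le hCF) hFsmul hFtri hGsmul hS⟩
  rw [inv_mul_le_iff₀ hCG₀]
  exact kernelRadius_le_mul_of_recovery hCG₀.le hFsmul hGsmul hGtri φ hr

theorem stmt6 (F G : Type*) [AddCommGroup F] [Module ℝ F] [AddCommGroup G] [Module ℝ G]
    (nF : F → ℝ) (nG : G → ℝ) (CF CG : ℝ) (hCF : 1 ≤ CF) (hCG : 1 ≤ CG)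
    -- `nF` is a quasi-norm on `F` with constant `C_F`:
    (hFnonneg : ∀ f, 0 ≤ nF f)
    (hFzero : ∀ f, nF f = 0 ↔ f = 0)
    (hFsmul : ∀ (c : ℝ) (f : F), nF (c • f) = |c| * nF f)
    (hFtri : ∀ f g : F, nF (f + g) ≤ CF * (nF f + nF g))
    -- `nG` is a quasi-norm on `G` with constant `C_G`:
    (hGnonneg : ∀ g, 0 ≤ nG g)
    (hGzero : ∀ g, nG g = 0 ↔ g = 0)
    (hGsmul : ∀ (c : ℝ) (g : G), nG (c • g) = |c| * nG g)
    (hGtri : ∀ g g' : G, nG (g + g') ≤ CG * (nG g + nG g'))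
    -- `S` is a bounded linear map:
    (S : F →ₗ[ℝ] G)
    (hS : ∃ M : ℝ, ∀ f : F, nF f ≤ 1 → nG (S f) ≤ M)
    -- the information map `N = (L₁, …, L_n)`:
    (n : ℕ) (L : Fin n → F →ₗ[ℝ] ℝ) :
    -- the radius of the trace of the unit ball on the kernel of the information map:
    ∀ R : ℝ, R = sSup {r : ℝ | ∃ f : F, nF f ≤ 1 ∧ (∀ i, L i f = 0) ∧ r = nG (S f)} →
      -- lower bound: every worst-case-error bound `r` of any reconstruction map `φ`
      -- satisfies `C_G⁻¹ · R ≤ r`: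
      (∀ φ : (Fin n → ℝ) → G, ∀ r : ℝ,
          (∀ f : F, nF f ≤ 1 → nG (S f - φ (fun i => L i f)) ≤ r) → CG⁻¹ * R ≤ r) ∧
      -- upper bound: some reconstruction map `φ` has worst-case error at most `2·C_F·R`:
      (∃ φ : (Fin n → ℝ) → G, ∀ f : F, nF f ≤ 1 →
          nG (S f - φ (fun i => L i f)) ≤ 2 * CF * R) :=
  stmt6_general F G nF nG CF CG hCF hCG hFsmul hFtri hGsmul hGtri S hS n L
end
end

section
/- Let m ∈ ℕ, 0 < p, q ≤ ∞ and λ > (1/q − 1/p)₊ (with the convention a/∞ = 0), and set σ_j = j^{−λ} for 1 ≤ j ≤ m. Then there are constants c, C > 0 depending only on p, q and λ (independent of s and m) such that for all integers s with 1 ≤ s ≤ m/2: c·s^{−λ + 1/q − 1/p} ≤ sup_{x ∈ 𝓔_{p,σ}^m} σ_s(x)_q ≤ C·s^{−λ + 1/q − 1/p}. -/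
open Real
open scoped ENNReal NNReal

noncomputable section

/-- Membership in the `ℓ_p`-ellipsoid `𝓔_{p,σ}^m` with semiaxes `σ` (indexed 1-based),
for `p ∈ (0,∞]`. -/
def memEll (p : ℝ≥0∞) {m : ℕ} (σ : ℕ → ℝ) (x : Fin m → ℝ) : Prop :=
  if p = ⊤ then ∀ i : Fin m, |x i| ≤ σ ((i : ℕ) + 1)
  else ∑ i : Fin m, |x i| ^ p.toReal / σ ((i : ℕ) + 1) ^ p.toReal ≤ 1

/-- A vector of `ℝ^m` is `s`-sparse if at most `s` of its coordinates are non-zero. -/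
def IsSparse {m : ℕ} (s : ℕ) (z : Fin m → ℝ) : Prop :=
  ∃ T : Finset (Fin m), T.card ≤ s ∧ ∀ i ∉ T, z i = 0

/-- The `ℓ_q`-(quasi-)norm on `ℝ^m` for `q ∈ (0,∞]`. -/
def lqnorm (q : ℝ≥0∞) {m : ℕ} (x : Fin m → ℝ) : ℝ :=
  if q = ⊤ then ⨆ i, |x i| else (∑ i, |x i| ^ q.toReal) ^ (1 / q.toReal)

/-- The error of best `s`-term approximation of `x` in the `ℓ_q`-(quasi-)norm. -/
def bestApprox (q : ℝ≥0∞) {m : ℕ} (s : ℕ) (x : Fin m → ℝ) : ℝ :=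
  sInf {r : ℝ | ∃ z : Fin m → ℝ, IsSparse s z ∧ r = lqnorm q (x - z)}

/-!
Write `d = λ + 1/p`. If `t ≤ |x_i|` for all `i` in a set `S` of `n` indices of a point `x` of the
ellipsoid, then `t^p ∑_{i∈S} i^{λp} ≤ 1`; as at least half of any `n` distinct indices exceed
`n/2`, this forces `t ≤ (n/2)^{-d}`, so the `k`-th largest coordinate of `x` is at most
`(k/2)^{-d}`. Discarding the `s` largest coordinates leaves an `ℓ_q`-tail of size
`≲ (∑_{k>s} k^{-dq})^{1/q} ≲ s^{1/q-d}`, the series converging because `dq > 1`.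
Conversely, the vector equal to `(2s)^{-d}` on its first `2s` coordinates lies in the ellipsoid,
and every `s`-sparse vector misses `s` of these coordinates, which costs `s^{1/q} (2s)^{-d}`.
-/

open Finset

variable {m : ℕ}

section Norms

theorem lqnorm_nonneg (q : ℝ≥0∞) (x : Fin m → ℝ) : 0 ≤ lqnorm q x := by
  unfold lqnorm
  split_ifs
  · exact Real.iSup_nonneg fun i => abs_nonneg _
  · positivity

theorem lqnorm_comp_perm (q : ℝ≥0∞) (x : Fin m → ℝ) (σ : Equiv.Perm (Fin m)) :
    lqnorm q (x ∘ σ) = lqnorm q x := by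
  unfold lqnorm
  split_ifs
  · exact σ.iSup_comp (g := fun i => |x i|)
  · rw [Function.comp_def, Equiv.sum_comp σ fun i => |x i| ^ q.toReal]

theorem lqnorm_mono (q : ℝ≥0∞) {x y : Fin m → ℝ} (h : ∀ i, |x i| ≤ |y i|) :
    lqnorm q x ≤ lqnorm q y := by
  unfold lqnorm
  split_ifs
  · exact ciSup_mono (Set.finite_range _).bddAbove h
  · refine Real.rpow_le_rpow (by positivity) (sum_le_sum fun i _ => ?_) (by positivity)
    exact Real.rpow_le_rpow (abs_nonneg _) (h i) ENNReal.toReal_nonneg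

theorem natCast_rpow_mul_le_lqnorm {q : ℝ≥0∞} (hq : q ≠ 0) {y : Fin m → ℝ} {U : Finset (Fin m)}
    {n : ℕ} (hn : 0 < n) (hU : n ≤ #U) {a : ℝ} (ha : 0 ≤ a) (hy : ∀ i ∈ U, a ≤ |y i|) :
    (n : ℝ) ^ (1 / q.toReal) * a ≤ lqnorm q y := by
  unfold lqnorm
  split_ifs with hqtop
  · obtain ⟨i, hi⟩ : U.Nonempty := card_pos.mp (hn.trans_le hU)
    simp only [hqtop, ENNReal.toReal_top, div_zero, Real.rpow_zero, one_mul]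
    exact (hy i hi).trans (le_ciSup (Set.finite_range fun i => |y i|).bddAbove i)
  · set Q := q.toReal
    have hQ : 0 < Q := ENNReal.toReal_pos hq hqtop
    calc (n : ℝ) ^ (1 / Q) * a = ((n : ℝ) * a ^ Q) ^ (1 / Q) := by
          rw [Real.mul_rpow (by positivity) (by positivity), ← Real.rpow_mul ha,
            mul_one_div_cancel hQ.ne', Real.rpow_one]
      _ ≤ (∑ i ∈ U, |y i| ^ Q) ^ (1 / Q) := by
          gcongr
          calc (n : ℝ) * a ^ Q ≤ #U * a ^ Q := by gcongr
            _ = ∑ i ∈ U, a ^ Q := by rw [sum_const, nsmul_eq_mul]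
            _ ≤ ∑ i ∈ U, |y i| ^ Q := by gcongr with i hi; exact hy i hi
      _ ≤ (∑ i, |y i| ^ Q) ^ (1 / Q) := by
          gcongr
          exact subset_univ U

theorem bestApprox_le_lqnorm_of_card_le (q : ℝ≥0∞) {s : ℕ} (x : Fin m → ℝ)
    {T : Finset (Fin m)} (hT : #T ≤ s) :
    bestApprox q s x ≤ lqnorm q fun i => if i ∈ T then 0 else x i := by
  refine csInf_le ⟨0, ?_⟩ ⟨fun i => if i ∈ T then x i else 0, ⟨T, hT, fun i hi => if_neg hi⟩, ?_⟩
  · rintro _ ⟨z, _, rfl⟩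
    exact lqnorm_nonneg q _
  · congr 1
    ext i
    split_ifs <;> simp [*]

theorem natCast_rpow_mul_le_bestApprox {q : ℝ≥0∞} (hq : q ≠ 0) {x : Fin m → ℝ}
    {U : Finset (Fin m)} {s n : ℕ} (hn : 0 < n) (hU : s + n ≤ #U) {a : ℝ} (ha : 0 ≤ a)
    (hx : ∀ i ∈ U, a ≤ |x i|) :
    (n : ℝ) ^ (1 / q.toReal) * a ≤ bestApprox q s x := by
  refine le_csInf ⟨_, 0, ⟨∅, by simp, fun _ _ => rfl⟩, rfl⟩ ?_
  rintro _ ⟨z, ⟨T, hT, hz⟩, rfl⟩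
  refine natCast_rpow_mul_le_lqnorm hq (U := U \ T) hn ?_ ha fun i hi => ?_
  · have := le_card_sdiff T U
    omega
  · rw [mem_sdiff] at hi
    simpa [hz i hi.2] using hx i hi.1

end Norms

theorem exists_perm_antitone_abs (x : Fin m → ℝ) :
    ∃ σ : Equiv.Perm (Fin m), Antitone fun k => |x (σ k)| :=
  ⟨Tuple.sort fun i => -|x i|, fun _ _ hab => by
    simpa using Tuple.monotone_sort (fun i => -|x i|) hab⟩

theorem sum_Ico_add_one_rpow_neg_le {r : ℝ} (hr : 1 < r) {s : ℕ} (hs : 1 ≤ s) (n : ℕ) :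
    ∑ i ∈ Ico s n, ((i : ℝ) + 1) ^ (-r) ≤ (s : ℝ) ^ (1 - r) / (r - 1) := by
  have hs0 : (0 : ℝ) < s := by exact_mod_cast hs
  rcases lt_or_ge n s with hns | hsn
  · rw [Ico_eq_empty_of_le hns.le, sum_empty]
    exact div_nonneg (by positivity) (by linarith)
  have hanti : AntitoneOn (fun y : ℝ => y ^ (-r)) (Set.Icc (s : ℝ) n) := fun a ha b _ hab =>
    Real.rpow_le_rpow_of_nonpos (hs0.trans_le ha.1) hab (by linarith)
  have hint := hanti.sum_le_integral_Ico hsn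
  rw [integral_rpow (Or.inr ⟨by linarith, fun h0 => by
    rw [Set.uIcc_of_le (by exact_mod_cast hsn)] at h0
    linarith [h0.1]⟩)] at hint
  push_cast at hint
  refine hint.trans ?_
  rw [show -r + 1 = 1 - r by ring]
  calc ((n : ℝ) ^ (1 - r) - (s : ℝ) ^ (1 - r)) / (1 - r)
      = ((s : ℝ) ^ (1 - r) - (n : ℝ) ^ (1 - r)) / (r - 1) := by
        rw [div_eq_div_iff (by linarith) (by linarith)]; ring
    _ ≤ (s : ℝ) ^ (1 - r) / (r - 1) := by
        gcongr
        linarith [Real.rpow_nonneg (Nat.cast_nonneg n) (1 - r)]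

theorem card_div_two_rpow_le_sum (S : Finset ℕ) {r : ℝ} (hr : 0 ≤ r) :
    ((#S : ℝ) / 2) ^ (r + 1) ≤ ∑ i ∈ S, ((i : ℝ) + 1) ^ r := by
  set h := #S / 2
  have hsmall : #{i ∈ S | i < h} ≤ h := by
    simpa using card_le_card fun i hi => mem_range.2 (mem_filter.1 hi).2
  have hlarge : (#S : ℝ) / 2 ≤ #{i ∈ S | ¬i < h} := by
    have := card_filter_add_card_filter_not (s := S) fun i => i < h
    have : #S ≤ 2 * #{i ∈ S | ¬i < h} := by omega
    rw [div_le_iff₀ two_pos]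
    exact_mod_cast (by linarith : #S ≤ #{i ∈ S | ¬i < h} * 2)
  calc ((#S : ℝ) / 2) ^ (r + 1) = (#S : ℝ) / 2 * ((#S : ℝ) / 2) ^ r := by
        rw [Real.rpow_add_one' (by positivity) (by positivity), mul_comm]
    _ ≤ #{i ∈ S | ¬i < h} * ((#S : ℝ) / 2) ^ r := by gcongr
    _ = ∑ i ∈ S with ¬i < h, ((#S : ℝ) / 2) ^ r := by rw [sum_const, nsmul_eq_mul]
    _ ≤ ∑ i ∈ S with ¬i < h, ((i : ℝ) + 1) ^ r := by
        gcongr with i hi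
        have : #S < 2 * (i + 1) := by have := (mem_filter.1 hi).2; omega
        rw [div_le_iff₀ two_pos]
        exact_mod_cast this.le.trans_eq (mul_comm _ _)
    _ ≤ ∑ i ∈ S, ((i : ℝ) + 1) ^ r :=
        sum_le_sum_of_subset_of_nonneg (filter_subset _ _) fun _ _ _ => by positivity

section Ellipsoid

variable {p : ℝ≥0∞} {lam : ℝ}

theorem memEll_rpow_neg_iff (hp : p ≠ ⊤) {x : Fin m → ℝ} :
    memEll p (fun j : ℕ => (j : ℝ) ^ (-lam)) x ↔
      ∑ i : Fin m, |x i| ^ p.toReal * ((i : ℝ) + 1) ^ (lam * p.toReal) ≤ 1 := by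
  rw [memEll, if_neg hp]
  congr! 2 with i
  rw [← Real.rpow_mul (by positivity), neg_mul, Real.rpow_neg (by positivity), div_inv_eq_mul]
  push_cast
  rfl

theorem le_card_div_two_rpow_of_memEll (hp : 0 < p) (hlam : 0 ≤ lam) {x : Fin m → ℝ}
    (hx : memEll p (fun j : ℕ => (j : ℝ) ^ (-lam)) x) {S : Finset (Fin m)} (hS : S.Nonempty)
    {t : ℝ} (ht : 0 ≤ t) (hxS : ∀ i ∈ S, t ≤ |x i|) :
    t ≤ ((#S : ℝ) / 2) ^ (-(lam + 1 / p.toReal)) := by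
  have hS2 : 0 < (#S : ℝ) / 2 := by have := hS.card_pos; positivity
  by_cases hptop : p = ⊤
  · rw [memEll, if_pos hptop] at hx
    set i := S.max' hS
    have hcard : #S ≤ (i : ℕ) + 1 := by
      simpa using card_le_card fun j hj => mem_Iic.2 (S.le_max' j hj)
    simp only [hptop, ENNReal.toReal_top, div_zero, add_zero]
    calc t ≤ |x i| := hxS i (S.max'_mem hS)
      _ ≤ (((i : ℕ) + 1 : ℕ) : ℝ) ^ (-lam) := hx i
      _ ≤ ((#S : ℝ) / 2) ^ (-lam) := by
          refine Real.rpow_le_rpow_of_nonpos hS2 ?_ (neg_nonpos.2 hlam)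
          have : (#S : ℝ) ≤ (i : ℕ) + 1 := by exact_mod_cast hcard
          push_cast
          linarith
  · set P := p.toReal
    have hP : 0 < P := ENNReal.toReal_pos hp.ne' hptop
    rw [memEll_rpow_neg_iff hptop] at hx
    have hsum := card_div_two_rpow_le_sum (S.map Fin.valEmbedding) (r := lam * P) (by positivity)
    rw [card_map, sum_map] at hsum
    have key : t ^ P * ((#S : ℝ) / 2) ^ (lam * P + 1) ≤ 1 := calc
      t ^ P * ((#S : ℝ) / 2) ^ (lam * P + 1)
          ≤ ∑ i ∈ S, t ^ P * ((i : ℝ) + 1) ^ (lam * P) := by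
            rw [← mul_sum]
            gcongr
            simpa using hsum
      _ ≤ ∑ i ∈ S, |x i| ^ P * ((i : ℝ) + 1) ^ (lam * P) := by
            gcongr with i hi
            exact hxS i hi
      _ ≤ ∑ i, |x i| ^ P * ((i : ℝ) + 1) ^ (lam * P) := by
            gcongr
            exact subset_univ S
      _ ≤ 1 := hx
    calc t = (t ^ P) ^ (1 / P) := by
          rw [← Real.rpow_mul ht, mul_one_div_cancel hP.ne', Real.rpow_one]
      _ ≤ (((#S : ℝ) / 2) ^ (-(lam * P + 1))) ^ (1 / P) := by
          gcongr
          rw [Real.rpow_neg hS2.le, ← one_div, le_div_iff₀ (by positivity)]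
          exact key
      _ = ((#S : ℝ) / 2) ^ (-(lam + 1 / P)) := by
          rw [← Real.rpow_mul hS2.le]
          congr 1
          field_simp

theorem abs_le_of_antitone_of_memEll (hp : 0 < p) (hlam : 0 ≤ lam) {x : Fin m → ℝ}
    (hx : memEll p (fun j : ℕ => (j : ℝ) ^ (-lam)) x) {σ : Equiv.Perm (Fin m)}
    (hσ : Antitone fun k => |x (σ k)|) (k : Fin m) :
    |x (σ k)| ≤ (((k : ℝ) + 1) / 2) ^ (-(lam + 1 / p.toReal)) := by
  have := le_card_div_two_rpow_of_memEll hp hlam hx (S := (Iic k).map σ.toEmbedding)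
    ⟨σ k, by simp⟩ (abs_nonneg _) fun j hj => by
      simpa using hσ (mem_Iic.1 (mem_map_equiv.1 hj))
  simpa [Fin.card_Iic] using this

theorem memEll_indicator_lt (hp : 0 < p) (hlam : 0 ≤ lam) (n : ℕ) :
    memEll p (fun j : ℕ => (j : ℝ) ^ (-lam))
      (fun i : Fin m => if (i : ℕ) < n then (n : ℝ) ^ (-(lam + 1 / p.toReal)) else 0) := by
  by_cases hptop : p = ⊤
  · rw [memEll, if_pos hptop]
    intro i
    split_ifs with hi
    · simp only [hptop, ENNReal.toReal_top, div_zero, add_zero]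
      rw [abs_of_nonneg (by positivity)]
      refine Real.rpow_le_rpow_of_nonpos (by positivity) ?_ (neg_nonpos.2 hlam)
      exact_mod_cast hi
    · simp only [abs_zero]
      positivity
  · set P := p.toReal
    have hP : 0 < P := ENNReal.toReal_pos hp.ne' hptop
    rw [memEll_rpow_neg_iff hptop]
    have hterm : ∀ i : Fin m, |if (i : ℕ) < n then (n : ℝ) ^ (-(lam + 1 / P)) else 0| ^ P *
        ((i : ℝ) + 1) ^ (lam * P) ≤ if (i : ℕ) < n then (n : ℝ)⁻¹ else 0 := by
      intro i
      split_ifs with hi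
      · have hn : (0 : ℝ) < n := Nat.cast_pos.2 (by omega)
        rw [abs_of_nonneg (by positivity), ← Real.rpow_mul hn.le]
        calc (n : ℝ) ^ (-(lam + 1 / P) * P) * ((i : ℝ) + 1) ^ (lam * P)
            ≤ (n : ℝ) ^ (-(lam + 1 / P) * P) * (n : ℝ) ^ (lam * P) := by
              gcongr
              exact_mod_cast hi
          _ = (n : ℝ)⁻¹ := by
              rw [← Real.rpow_add hn, ← Real.rpow_neg_one]
              congr 1
              field_simp
              ring
      · simp [Real.zero_rpow hP.ne']
    calc _ ≤ ∑ i : Fin m, if (i : ℕ) < n then (n : ℝ)⁻¹ else 0 := sum_le_sum fun i _ => hterm i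
      _ = #{i : Fin m | (i : ℕ) < n} * (n : ℝ)⁻¹ := by rw [← sum_filter, sum_const, nsmul_eq_mul]
      _ ≤ n * (n : ℝ)⁻¹ := by
          gcongr
          rw [Fin.card_filter_val_lt]
          exact_mod_cast min_le_right _ _
      _ ≤ 1 := mul_inv_le_one

end Ellipsoid

theorem exists_lqnorm_tail_le {q : ℝ≥0∞} (hq : q ≠ 0) {d : ℝ} (hd : 1 / q.toReal < d) :
    ∃ C > 0, ∀ m s : ℕ, 1 ≤ s →
      lqnorm q (fun k : Fin m => if s ≤ (k : ℕ) then (((k : ℝ) + 1) / 2) ^ (-d) else 0)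
        ≤ C * (s : ℝ) ^ (1 / q.toReal - d) := by
  by_cases hqtop : q = ⊤
  · simp only [hqtop, ENNReal.toReal_top, div_zero, zero_sub] at hd ⊢
    refine ⟨2 ^ d, by positivity, fun m s hs => ?_⟩
    have hs0 : (0 : ℝ) < s := by exact_mod_cast hs
    rw [lqnorm, if_pos rfl]
    refine Real.iSup_le (fun k => ?_) (by positivity)
    split_ifs with hk
    · rw [abs_of_nonneg (by positivity)]
      calc (((k : ℝ) + 1) / 2) ^ (-d) ≤ ((s : ℝ) / 2) ^ (-d) := by
            refine Real.rpow_le_rpow_of_nonpos (by positivity) ?_ (by linarith)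
            have : (s : ℝ) ≤ k := by exact_mod_cast hk
            linarith
        _ = 2 ^ d * (s : ℝ) ^ (-d) := by
            rw [Real.div_rpow hs0.le two_pos.le, Real.rpow_neg two_pos.le, div_inv_eq_mul,
              mul_comm]
    · simp only [abs_zero]
      positivity
  · set Q := q.toReal
    have hQ : 0 < Q := ENNReal.toReal_pos hq hqtop
    set r := d * Q
    have hr : 1 < r := by rwa [div_lt_iff₀ hQ] at hd
    have hr1 : 0 < r - 1 := by linarith
    refine ⟨(2 ^ r / (r - 1)) ^ (1 / Q), by positivity, fun m s hs => ?_⟩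
    have hs0 : (0 : ℝ) < s := by exact_mod_cast hs
    have hsum : ∑ k : Fin m, |if s ≤ (k : ℕ) then (((k : ℝ) + 1) / 2) ^ (-d) else 0| ^ Q
        = 2 ^ r * ∑ i ∈ Ico s m, ((i : ℝ) + 1) ^ (-r) := by
      rw [Fin.sum_univ_eq_sum_range
        (fun k => |if s ≤ k then (((k : ℝ) + 1) / 2) ^ (-d) else 0| ^ Q), mul_sum,
        show Ico s m = {i ∈ range m | s ≤ i} by ext; simp; omega, sum_filter]
      refine sum_congr rfl fun i _ => ?_
      split_ifs
      · rw [abs_of_nonneg (by positivity), ← Real.rpow_mul (by positivity), neg_mul,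
          Real.div_rpow (by positivity) two_pos.le, Real.rpow_neg two_pos.le, div_inv_eq_mul,
          mul_comm]
      · simp [Real.zero_rpow hQ.ne']
    rw [lqnorm, if_neg hqtop, hsum]
    calc (2 ^ r * ∑ i ∈ Ico s m, ((i : ℝ) + 1) ^ (-r)) ^ (1 / Q)
        ≤ (2 ^ r / (r - 1) * (s : ℝ) ^ (1 - r)) ^ (1 / Q) := by
          refine Real.rpow_le_rpow (by positivity) ?_ (by positivity)
          calc _ ≤ 2 ^ r * ((s : ℝ) ^ (1 - r) / (r - 1)) := by
                gcongr
                exact sum_Ico_add_one_rpow_neg_le hr hs m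
            _ = _ := by ring
      _ = (2 ^ r / (r - 1)) ^ (1 / Q) * (s : ℝ) ^ (1 / Q - d) := by
          rw [Real.mul_rpow (by positivity) (by positivity), ← Real.rpow_mul hs0.le]
          congr 2
          field_simp
          ring

section Bounds

variable {p q : ℝ≥0∞} {lam : ℝ}

theorem exists_bestApprox_le (hp : 0 < p) (hq : q ≠ 0) (hlam : 0 ≤ lam)
    (hd : 1 / q.toReal < lam + 1 / p.toReal) :
    ∃ C > 0, ∀ (m s : ℕ) (x : Fin m → ℝ), 1 ≤ s →
      memEll p (fun j : ℕ => (j : ℝ) ^ (-lam)) x →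
        bestApprox q s x ≤ C * (s : ℝ) ^ (1 / q.toReal - (lam + 1 / p.toReal)) := by
  obtain ⟨C, hC, htail⟩ := exists_lqnorm_tail_le hq hd
  refine ⟨C, hC, fun m s x hs hx => ?_⟩
  obtain ⟨σ, hσ⟩ := exists_perm_antitone_abs x
  set T := ({k | (k : ℕ) < s} : Finset (Fin m)).map σ.toEmbedding
  have hT : #T ≤ s := by
    rw [card_map, Fin.card_filter_val_lt]
    exact min_le_right _ _
  calc bestApprox q s x ≤ lqnorm q fun i => if i ∈ T then 0 else x i :=
        bestApprox_le_lqnorm_of_card_le q x hT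
    _ = lqnorm q ((fun i => if i ∈ T then 0 else x i) ∘ σ) := (lqnorm_comp_perm ..).symm
    _ ≤ lqnorm q fun k : Fin m =>
          if s ≤ (k : ℕ) then (((k : ℝ) + 1) / 2) ^ (-(lam + 1 / p.toReal)) else 0 := by
        refine lqnorm_mono q fun k => ?_
        simp only [Function.comp_apply, T, mem_map_equiv, Equiv.symm_apply_apply, mem_filter,
          mem_univ, true_and]
        split_ifs with hk hk' hk'
        · omega
        · simp
        · rw [abs_of_nonneg (a := (_ / 2) ^ _) (by positivity)]
          exact abs_le_of_antitone_of_memEll hp hlam hx hσ k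
        · omega
    _ ≤ C * (s : ℝ) ^ (1 / q.toReal - (lam + 1 / p.toReal)) := htail m s hs

theorem exists_memEll_le_bestApprox (hp : 0 < p) (hq : q ≠ 0) (hlam : 0 ≤ lam) {m s : ℕ}
    (hs : 1 ≤ s) (hsm : 2 * s ≤ m) :
    ∃ x : Fin m → ℝ, memEll p (fun j : ℕ => (j : ℝ) ^ (-lam)) x ∧
      2 ^ (-(lam + 1 / p.toReal)) * (s : ℝ) ^ (1 / q.toReal - (lam + 1 / p.toReal))
        ≤ bestApprox q s x := by
  set d := lam + 1 / p.toReal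
  refine ⟨_, memEll_indicator_lt hp hlam (2 * s), ?_⟩
  have hs0 : (0 : ℝ) < s := by exact_mod_cast hs
  have hU : s + s ≤ #{i : Fin m | (i : ℕ) < 2 * s} := by
    rw [Fin.card_filter_val_lt]
    omega
  refine le_of_eq_of_le ?_ (natCast_rpow_mul_le_bestApprox hq hs hU
    (a := ((2 * s : ℕ) : ℝ) ^ (-d)) (by positivity) fun i hi => ?_)
  · rw [Nat.cast_mul, Nat.cast_ofNat, Real.mul_rpow two_pos.le hs0.le, sub_eq_add_neg,
      Real.rpow_add hs0]
    ring
  · rw [if_pos (mem_filter.1 hi).2, abs_of_nonneg (by positivity)]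

end Bounds

theorem stmt7 :
    ∀ p q : ℝ≥0∞, 0 < p → 0 < q →
    ∀ lam : ℝ, max (1 / q.toReal - 1 / p.toReal) 0 < lam →
      ∃ c C : ℝ, 0 < c ∧ 0 < C ∧
        ∀ m s : ℕ, 1 ≤ s → 2 * s ≤ m →
          c * (s : ℝ) ^ (-lam + 1 / q.toReal - 1 / p.toReal) ≤
            sSup (bestApprox q s ''
              {x : Fin m → ℝ | memEll p (fun j => (j : ℝ) ^ (-lam)) x}) ∧
          sSup (bestApprox q s ''
              {x : Fin m → ℝ | memEll p (fun j => (j : ℝ) ^ (-lam)) x}) ≤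
            C * (s : ℝ) ^ (-lam + 1 / q.toReal - 1 / p.toReal) := by
  intro p q hp hq lam hlam
  have hlam0 : 0 ≤ lam := (le_max_right _ _).trans hlam.le
  have hd : 1 / q.toReal < lam + 1 / p.toReal := by
    linarith [(le_max_left _ _).trans_lt hlam]
  obtain ⟨C, hC, hupper⟩ := exists_bestApprox_le hp hq.ne' hlam0 hd
  refine ⟨2 ^ (-(lam + 1 / p.toReal)), C, by positivity, hC, fun m s hs hsm => ?_⟩
  obtain ⟨x₀, hx₀, hlower⟩ := exists_memEll_le_bestApprox hp hq.ne' hlam0 hs hsm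
  have hbound : ∀ r ∈ bestApprox q s '' {x : Fin m → ℝ | memEll p (fun j => (j : ℝ) ^ (-lam)) x},
      r ≤ C * (s : ℝ) ^ (1 / q.toReal - (lam + 1 / p.toReal)) :=
    Set.forall_mem_image.2 fun x hx => hupper m s x hs hx
  rw [show -lam + 1 / q.toReal - 1 / p.toReal = 1 / q.toReal - (lam + 1 / p.toReal) by ring]
  exact ⟨hlower.trans (le_csSup ⟨_, hbound⟩ (Set.mem_image_of_mem _ hx₀)),
    csSup_le ⟨_, Set.mem_image_of_mem _ hx₀⟩ hbound⟩
end
end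

section
/- Let Ω ⊂ ℝ^d be a bounded convex domain (a bounded, open, convex, non-empty set) and let 0 < γ ≤ ∞. Then there exist constants c, C > 0 (depending on Ω, γ and d) such that for all n ∈ ℕ: c·n^{−1/d} ≤ inf{ ‖dist(·, P)‖_{L_γ(Ω)} : P ⊂ Ω finite with #P ≤ n } ≤ C·n^{−1/d}. -/
/-!
Upper bound: a maximal `r`-separated subset of `Ω` is an `r`-net of `Ω`, and the balls of radius
`r / 2` around its points are disjoint and lie in a fixed neighbourhood of `Ω`, so it has
`O(r⁻ᵈ)` points; with `r ≍ n^(-1/d)` this gives `n` points with `dist(·, P) ≤ C n^(-1/d)` on `Ω`.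
Lower bound: `n` balls of radius `a n^(-1/d)` have total volume `vol B(0, a)`, at most `vol Ω / 2`
for small `a`, so `dist(·, P) ≥ a n^(-1/d)` on half of `Ω`, and Markov's inequality turns this
into a lower bound for the `L_γ` norm.
-/

open MeasureTheory Real
open scoped ENNReal NNReal

noncomputable section

/-- The `L_γ(Ω)`-norm (for `0 < γ ≤ ∞`) of the distance function `x ↦ dist(x, S)` to a
set `S`, with respect to Lebesgue measure on `Ω`. -/
def distLp {d : ℕ} (γ : ℝ≥0∞) (Ω S : Set (EuclideanSpace ℝ (Fin d))) : ℝ :=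
  if γ = ⊤ then ⨆ x ∈ Ω, Metric.infDist x S
  else (∫ x in Ω, Metric.infDist x S ^ γ.toReal) ^ (1 / γ.toReal)

open Bornology Metric Module

theorem Real.rpow_neg_one_div_natCast_pow {x : ℝ} (hx : 0 ≤ x) {k : ℕ} (hk : k ≠ 0) :
    (x ^ (-(1 / (k : ℝ)))) ^ k = x⁻¹ := by
  rw [Real.rpow_neg hx, inv_pow, one_div, Real.rpow_inv_natCast_pow hx hk]

namespace Metric

variable {X : Type*} [PseudoEMetricSpace X]

theorem exists_finset_isSeparated_isCover {Ω : Set X} (hΩ : TotallyBounded Ω) {ε : ℝ≥0}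
    (hε : ε ≠ 0) :
    ∃ C : Finset X, ↑C ⊆ Ω ∧ IsSeparated (ε : ℝ≥0∞) (C : Set X) ∧ IsCover ε Ω C := by
  have hpack : packingNumber ε Ω ≠ ⊤ := by
    obtain ⟨N, -, hN, hΩN⟩ :=
      exists_finite_isCover_of_totallyBounded (ε := ε / 2) (by simpa using hε) hΩ
    refine ne_top_of_le_ne_top hN.encard_lt_top.ne ?_
    calc packingNumber ε Ω = packingNumber (2 * (ε / 2)) Ω := by
          rw [mul_div_cancel₀ _ two_ne_zero]
      _ ≤ externalCoveringNumber (ε / 2) Ω := packingNumber_two_mul_le_externalCoveringNumber _ _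
      _ ≤ N.encard := hΩN.externalCoveringNumber_le_encard
  have hfin : (maximalSeparatedSet ε Ω).Finite := by
    rw [← Set.encard_lt_top_iff, encard_maximalSeparatedSet hpack]
    exact hpack.lt_top
  refine ⟨hfin.toFinset, ?_, ?_, ?_⟩ <;> rw [hfin.coe_toFinset]
  exacts [maximalSeparatedSet_subset, isSeparated_maximalSeparatedSet,
    isCover_maximalSeparatedSet hpack]

end Metric

theorem Metric.IsCover.infDist_le {X : Type*} [PseudoMetricSpace X] {ε : ℝ≥0} {Ω C : Set X}
    (hC : IsCover ε Ω C) {x : X} (hx : x ∈ Ω) : infDist x C ≤ ε := by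
  obtain ⟨y, hy, hxy⟩ := hC hx
  exact (infDist_le_dist_of_mem hy).trans (by simpa [edist_dist] using hxy)

section AddHaar

variable {E : Type*} [NormedAddCommGroup E] [MeasurableSpace E] [BorelSpace E]

theorem MeasureTheory.Measure.addHaar_real_ball_of_pos [NormedSpace ℝ E] [FiniteDimensional ℝ E]
    (μ : Measure E) [μ.IsAddHaarMeasure] (x : E) {r : ℝ} (hr : 0 < r) :
    μ.real (ball x r) = r ^ finrank ℝ E * μ.real (ball 0 1) := by
  rw [measureReal_def, Measure.addHaar_ball_of_pos μ x hr, ENNReal.toReal_mul,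
    ENNReal.toReal_ofReal (by positivity), measureReal_def]

theorem Finset.card_mul_measure_ball_le_measure_thickening (μ : Measure E) [μ.IsAddHaarMeasure]
    {Ω : Set E} {C : Finset E} (hCΩ : ↑C ⊆ Ω) {ε : ℝ≥0}
    (hC : IsSeparated (ε : ℝ≥0∞) (C : Set E)) :
    C.card * μ (ball 0 (ε / 2)) ≤ μ (thickening (ε / 2) Ω) := by
  have hdisj : (C : Set E).PairwiseDisjoint (ball · (ε / 2)) := by
    intro p hp q hq hpq
    have hsep : (ε : ℝ≥0∞) < edist p q := hC hp hq hpq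
    rw [edist_nndist, ENNReal.coe_lt_coe] at hsep
    exact ball_disjoint_ball (by rw [add_halves]; exact_mod_cast hsep.le)
  calc C.card * μ (ball 0 (ε / 2)) = ∑ p ∈ C, μ (ball p (ε / 2)) := by
        rw [Finset.sum_congr rfl fun p _ => Measure.addHaar_ball_center μ p _, Finset.sum_const,
          nsmul_eq_mul]
    _ = μ (⋃ p ∈ C, ball p (ε / 2)) :=
        (measure_biUnion_finset hdisj fun _ _ => measurableSet_ball).symm
    _ ≤ μ (thickening (ε / 2) Ω) :=
        measure_mono (Set.iUnion₂_subset fun p hp => ball_subset_thickening (hCΩ hp) _)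

variable [NormedSpace ℝ E] [FiniteDimensional ℝ E]

theorem exists_finset_card_le_max_forall_infDist_le {Ω : Set E} (hne : Ω.Nonempty)
    (hΩ : IsBounded Ω) :
    ∃ K : ℝ, ∀ r : ℝ, 0 < r → ∃ P : Finset E, ↑P ⊆ Ω ∧ P.Nonempty ∧
      (P.card : ℝ) ≤ max 1 (K * r⁻¹ ^ finrank ℝ E) ∧ ∀ x ∈ Ω, infDist x P ≤ r := by
  let μ : Measure E := Measure.addHaar
  set k := finrank ℝ E
  set V := μ.real (thickening (diam Ω) Ω)
  set ω := μ.real (ball 0 1)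
  have hω : 0 < ω :=
    ENNReal.toReal_pos (measure_ball_pos μ 0 one_pos).ne' measure_ball_lt_top.ne
  refine ⟨2 ^ k * V / ω, fun r hr => ?_⟩
  obtain ⟨x₀, hx₀⟩ := hne
  rcases le_or_gt (diam Ω) r with hdiam | hdiam
  · refine ⟨{x₀}, by simpa using hx₀, Finset.singleton_nonempty _, by simp, fun x hx => ?_⟩
    rw [Finset.coe_singleton, infDist_singleton]
    exact (dist_le_diam_of_mem hΩ hx hx₀).trans hdiam
  obtain ⟨P, hPΩ, hPsep, hPcov⟩ := exists_finset_isSeparated_isCover (ε := r.toNNReal)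
    (hΩ.isCompact_closure.totallyBounded.subset subset_closure) (by simpa using hr)
  have hpack : (P.card : ℝ) * ((r / 2) ^ k * ω) ≤ V := by
    have := ENNReal.toReal_mono (hΩ.thickening.measure_lt_top.ne)
      (P.card_mul_measure_ball_le_measure_thickening μ hPΩ hPsep)
    rw [Real.coe_toNNReal _ hr.le, ENNReal.toReal_mul, ENNReal.toReal_natCast, ← measureReal_def,
      Measure.addHaar_real_ball_of_pos μ 0 (half_pos hr)] at this
    exact this.trans (measureReal_mono (thickening_mono (by linarith) _)
      hΩ.thickening.measure_lt_top.ne)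
  refine ⟨P, hPΩ, Finset.coe_nonempty.mp (hPcov.nonempty ⟨x₀, hx₀⟩), le_max_of_le_right ?_,
    fun x hx => by simpa [hr.le] using hPcov.infDist_le hx⟩
  have hscale : (r / 2) ^ k * 2 ^ k * r⁻¹ ^ k = 1 := by
    rw [← mul_pow, ← mul_pow, div_mul_cancel₀ r two_ne_zero, mul_inv_cancel₀ hr.ne', one_pow]
  calc (P.card : ℝ) = P.card * ((r / 2) ^ k * 2 ^ k * r⁻¹ ^ k) * (ω / ω) := by
        rw [hscale, div_self hω.ne', mul_one, mul_one]
    _ = P.card * ((r / 2) ^ k * ω) * (2 ^ k / ω * r⁻¹ ^ k) := by ring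
    _ ≤ V * (2 ^ k / ω * r⁻¹ ^ k) := by gcongr
    _ = _ := by ring

variable [Nontrivial E]

theorem exists_forall_finset_card_le_infDist_le_mul_rpow {Ω : Set E} (hne : Ω.Nonempty)
    (hΩ : IsBounded Ω) :
    ∃ C : ℝ, 0 < C ∧ ∀ n : ℕ, 1 ≤ n → ∃ P : Finset E, ↑P ⊆ Ω ∧ P.Nonempty ∧ P.card ≤ n ∧
      ∀ x ∈ Ω, infDist x P ≤ C * (n : ℝ) ^ (-(1 / (finrank ℝ E : ℝ))) := by
  obtain ⟨K, hK⟩ := exists_finset_card_le_max_forall_infDist_le hne hΩ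
  set k := finrank ℝ E
  have hk : k ≠ 0 := finrank_pos.ne'
  set C := max K 1
  have hKC : K ≤ C ^ k := (le_max_left _ _).trans (le_self_pow₀ (le_max_right _ _) hk)
  refine ⟨C, by positivity, fun n hn => ?_⟩
  have hn0 : (0 : ℝ) < n := by exact_mod_cast hn
  obtain ⟨P, hPΩ, hP, hPcard, hPcov⟩ := hK (C * (n : ℝ) ^ (-(1 / (k : ℝ)))) (by positivity)
  refine ⟨P, hPΩ, hP, ?_, hPcov⟩
  have hKn : K * (C * (n : ℝ) ^ (-(1 / (k : ℝ))))⁻¹ ^ k ≤ n := by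
    rw [inv_pow, mul_pow, Real.rpow_neg_one_div_natCast_pow hn0.le hk, mul_inv, inv_inv,
      ← mul_assoc, ← div_eq_mul_inv]
    exact mul_le_of_le_one_left hn0.le ((div_le_one (by positivity)).mpr hKC)
  exact_mod_cast hPcard.trans (max_le (by exact_mod_cast hn) hKn)

theorem exists_forall_le_measureReal_mul_rpow_le_infDist (μ : Measure E)
    [μ.IsAddHaarMeasure] {Ω : Set E} (hne : Ω.Nonempty) (hop : IsOpen Ω) (hΩ : μ Ω ≠ ∞) :
    ∃ a m : ℝ, 0 < a ∧ 0 < m ∧ ∀ n : ℕ, ∀ P : Finset E, P.Nonempty → P.card ≤ n →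
      m ≤ μ.real ({x | a * (n : ℝ) ^ (-(1 / (finrank ℝ E : ℝ))) ≤ infDist x P} ∩ Ω) := by
  set k := finrank ℝ E
  have hk : k ≠ 0 := finrank_pos.ne'
  obtain ⟨x₀, hx₀⟩ := hne
  obtain ⟨ε, hε, hball⟩ := isOpen_iff.mp hop x₀ hx₀
  set ω := μ.real (ball 0 1)
  set a := (2 : ℝ) ^ (-(1 / (k : ℝ))) * ε
  have ha : a ^ k * ω ≤ μ.real Ω / 2 := by
    have := measureReal_mono hball hΩ
    rw [Measure.addHaar_real_ball_of_pos μ x₀ hε] at this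
    rw [mul_pow, Real.rpow_neg_one_div_natCast_pow zero_le_two hk]
    linarith
  refine ⟨a, μ.real Ω / 2, by positivity,
    half_pos (ENNReal.toReal_pos (hop.measure_pos μ ⟨x₀, hx₀⟩).ne' hΩ), fun n P hP hPn => ?_⟩
  have hn : (0 : ℝ) < n := by exact_mod_cast (P.card_pos.mpr hP).trans_le hPn
  set s := a * (n : ℝ) ^ (-(1 / (k : ℝ)))
  have hs : 0 < s := by positivity
  have hsub : Ω \ ⋃ p ∈ P, ball p s ⊆ {x | s ≤ infDist x P} ∩ Ω := by
    rintro x ⟨hxΩ, hx⟩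
    refine ⟨?_, hxΩ⟩
    by_contra hlt
    refine hx ?_
    obtain ⟨p, hp, hxp⟩ := (infDist_lt_iff (Finset.coe_nonempty.mpr hP)).mp (not_le.mp hlt)
    exact Set.mem_biUnion hp (mem_ball.mpr hxp)
  have hballs : μ.real (⋃ p ∈ P, ball p s) ≤ μ.real Ω / 2 := calc
    _ ≤ ∑ p ∈ P, μ.real (ball p s) := measureReal_biUnion_finset_le _ _
    _ = P.card * (s ^ k * ω) := by
        rw [Finset.sum_congr rfl fun p _ => Measure.addHaar_real_ball_of_pos μ p hs,
          Finset.sum_const, nsmul_eq_mul]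
    _ ≤ n * (s ^ k * ω) := by gcongr
    _ = a ^ k * ω := by
        rw [mul_pow, Real.rpow_neg_one_div_natCast_pow hn.le hk]
        field_simp
    _ ≤ μ.real Ω / 2 := ha
  calc μ.real Ω / 2 ≤ μ.real Ω - μ.real (⋃ p ∈ P, ball p s) := by linarith
    _ ≤ μ.real (Ω \ ⋃ p ∈ P, ball p s) :=
        le_measureReal_sdiff
          (measure_biUnion_lt_top P.finite_toSet fun _ _ => measure_ball_lt_top).ne
    _ ≤ _ := measureReal_mono hsub (ne_top_of_le_ne_top hΩ (measure_mono Set.inter_subset_right))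

end AddHaar

section distLp

variable {d : ℕ} {γ : ℝ≥0∞} {Ω S : Set (EuclideanSpace ℝ (Fin d))}

/- For `γ = ⊤` we have `γ.toReal = 0`, hence `x ^ (1 / γ.toReal) = 1`: the volume factors in the
next two bounds disappear and the same statements cover the supremum. -/

theorem distLp_nonneg : 0 ≤ distLp γ Ω S := by
  unfold distLp
  split_ifs
  · exact Real.iSup_nonneg fun x => Real.iSup_nonneg fun _ => infDist_nonneg
  · exact Real.rpow_nonneg (integral_nonneg fun x => Real.rpow_nonneg infDist_nonneg _) _

theorem distLp_le_mul_rpow (hγ : γ ≠ 0) (hΩ : volume Ω ≠ ∞) {r : ℝ} (hr : 0 ≤ r)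
    (hS : ∀ x ∈ Ω, infDist x S ≤ r) : distLp γ Ω S ≤ r * volume.real Ω ^ (1 / γ.toReal) := by
  unfold distLp
  split_ifs with hγ'
  · simpa [hγ'] using Real.iSup_le (fun x => Real.iSup_le (hS x) hr) hr
  have ht : 0 < γ.toReal := ENNReal.toReal_pos hγ hγ'
  have hint : ∫ x in Ω, infDist x S ^ γ.toReal ≤ r ^ γ.toReal * volume.real Ω := by
    refine (Real.le_norm_self _).trans
      (norm_setIntegral_le_of_norm_le_const hΩ.lt_top fun x hx => ?_)
    rw [Real.norm_of_nonneg (Real.rpow_nonneg infDist_nonneg _)]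
    exact Real.rpow_le_rpow infDist_nonneg (hS x hx) ht.le
  calc _ ≤ (r ^ γ.toReal * volume.real Ω) ^ (1 / γ.toReal) :=
        Real.rpow_le_rpow (integral_nonneg fun x => Real.rpow_nonneg infDist_nonneg _) hint
          (by positivity)
    _ = _ := by
        rw [Real.mul_rpow (by positivity) measureReal_nonneg, ← Real.rpow_mul hr,
          mul_one_div_cancel ht.ne', Real.rpow_one]

theorem mul_rpow_le_distLp (hγ : γ ≠ 0) (hΩ : IsBounded Ω) {s m : ℝ} (hs : 0 ≤ s) (hm : 0 < m)
    (hmΩ : m ≤ volume.real ({x | s ≤ infDist x S} ∩ Ω)) :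
    s * m ^ (1 / γ.toReal) ≤ distLp γ Ω S := by
  have hcont : Continuous (infDist · S) := continuous_infDist_pt S
  have hmeas : MeasurableSet {x | s ≤ infDist x S} :=
    measurableSet_le measurable_const hcont.measurable
  unfold distLp
  split_ifs with hγ'
  · obtain ⟨x, hxs, hxΩ⟩ : ({x | s ≤ infDist x S} ∩ Ω).Nonempty :=
      nonempty_of_measure_ne_zero (μ := volume) fun h => by
        rw [measureReal_def, h, ENNReal.toReal_zero] at hmΩ; linarith
    have hbdd : BddAbove (⋃ x, Set.range fun _ : x ∈ Ω => infDist x S) :=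
      (hΩ.isCompact_closure.bddAbove_image hcont.continuousOn).mono <| Set.iUnion_subset fun x =>
        Set.range_subset_iff.mpr fun hx => Set.mem_image_of_mem (infDist · S) (subset_closure hx)
    simpa [hγ'] using hxs.trans (le_ciSup₂ hbdd x hxΩ)
  have ht : 0 < γ.toReal := ENNReal.toReal_pos hγ hγ'
  have hint : IntegrableOn (fun x => infDist x S ^ γ.toReal) Ω :=
    ((hcont.rpow_const fun _ => Or.inr ht.le).continuousOn.integrableOn_compact
      hΩ.isCompact_closure).mono_set subset_closure
  have hmarkov := mul_meas_ge_le_integral_of_nonneg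
    (ae_of_all _ fun x => Real.rpow_nonneg infDist_nonneg _) hint (s ^ γ.toReal)
  have hset : {x | s ^ γ.toReal ≤ infDist x S ^ γ.toReal} = {x | s ≤ infDist x S} :=
    Set.ext fun x => Real.rpow_le_rpow_iff hs infDist_nonneg ht
  rw [hset, measureReal_restrict_apply hmeas] at hmarkov
  calc s * m ^ (1 / γ.toReal) = (s ^ γ.toReal * m) ^ (1 / γ.toReal) := by
        rw [Real.mul_rpow (by positivity) hm.le, ← Real.rpow_mul hs, mul_one_div_cancel ht.ne',
          Real.rpow_one]
    _ ≤ _ := Real.rpow_le_rpow (by positivity) (hmarkov.trans' (by gcongr)) (by positivity)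

end distLp

theorem stmt9_general (d : ℕ) (hd : 0 < d) (Ω : Set (EuclideanSpace ℝ (Fin d)))
    (hne : Ω.Nonempty) (hop : IsOpen Ω)
    (hbd : Bornology.IsBounded Ω) (γ : ℝ≥0∞) (hγ : 0 < γ) :
    ∃ c C : ℝ, 0 < c ∧ 0 < C ∧
      ∀ n : ℕ, 1 ≤ n →
        c * (n : ℝ) ^ (-(1 / (d : ℝ))) ≤
          sInf {r : ℝ | ∃ P : Finset (EuclideanSpace ℝ (Fin d)),
            ↑P ⊆ Ω ∧ P.Nonempty ∧ P.card ≤ n ∧ r = distLp γ Ω ↑P} ∧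
        sInf {r : ℝ | ∃ P : Finset (EuclideanSpace ℝ (Fin d)),
            ↑P ⊆ Ω ∧ P.Nonempty ∧ P.card ≤ n ∧ r = distLp γ Ω ↑P} ≤
          C * (n : ℝ) ^ (-(1 / (d : ℝ))) := by
  have : Nontrivial (EuclideanSpace ℝ (Fin d)) :=
    Module.nontrivial_of_finrank_pos (by rwa [finrank_euclideanSpace_fin])
  obtain ⟨C, hC, hcover⟩ := exists_forall_finset_card_le_infDist_le_mul_rpow hne hbd
  obtain ⟨a, m, ha, hm, hsparse⟩ :=
    exists_forall_le_measureReal_mul_rpow_le_infDist volume hne hop hbd.measure_lt_top.ne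
  simp only [finrank_euclideanSpace_fin] at hcover hsparse
  have hΩ : 0 < volume.real Ω :=
    ENNReal.toReal_pos (hop.measure_pos volume hne).ne' hbd.measure_lt_top.ne
  refine ⟨a * m ^ (1 / γ.toReal), C * volume.real Ω ^ (1 / γ.toReal), by positivity,
    by positivity, fun n hn => ?_⟩
  obtain ⟨P₀, hP₀Ω, hP₀, hP₀n, hP₀cover⟩ := hcover n hn
  constructor
  · refine le_csInf ⟨distLp γ Ω P₀, P₀, hP₀Ω, hP₀, hP₀n, rfl⟩ ?_
    rintro _ ⟨P, -, hP, hPn, rfl⟩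
    rw [mul_right_comm]
    exact mul_rpow_le_distLp hγ.ne' hbd (by positivity) hm (hsparse n P hP hPn)
  · refine le_trans (csInf_le ⟨0, ?_⟩ ⟨P₀, hP₀Ω, hP₀, hP₀n, rfl⟩) ?_
    · rintro _ ⟨P, -, -, -, rfl⟩
      exact distLp_nonneg
    · rw [mul_right_comm]
      exact distLp_le_mul_rpow hγ.ne' hbd.measure_lt_top.ne (by positivity) hP₀cover

theorem stmt9 (d : ℕ) (hd : 0 < d) (Ω : Set (EuclideanSpace ℝ (Fin d)))
    (hne : Ω.Nonempty) (hop : IsOpen Ω) (hconv : Convex ℝ Ω)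
    (hbd : Bornology.IsBounded Ω) (γ : ℝ≥0∞) (hγ : 0 < γ) :
    ∃ c C : ℝ, 0 < c ∧ 0 < C ∧
      ∀ n : ℕ, 1 ≤ n →
        c * (n : ℝ) ^ (-(1 / (d : ℝ))) ≤
          sInf {r : ℝ | ∃ P : Finset (EuclideanSpace ℝ (Fin d)),
            ↑P ⊆ Ω ∧ P.Nonempty ∧ P.card ≤ n ∧ r = distLp γ Ω ↑P} ∧
        sInf {r : ℝ | ∃ P : Finset (EuclideanSpace ℝ (Fin d)),
            ↑P ⊆ Ω ∧ P.Nonempty ∧ P.card ≤ n ∧ r = distLp γ Ω ↑P} ≤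
          C * (n : ℝ) ^ (-(1 / (d : ℝ))) :=
  stmt9_general d hd Ω hne hop hbd γ hγ
end
end

section
/- Let μ be a Borel probability measure on ℝ^d that is absolutely continuous with respect to Lebesgue measure, let 0 < r < ∞, and let P_n = {x₁, …, x_n} ⊂ ℝ^d be a finite set of n distinct points. Then, as identities in [0, ∞]: inf over probability vectors a = (a₁, …, a_n) (a_i ≥ 0, ∑ a_i = 1) of inf over couplings π of (μ, ∑_i a_i δ_{x_i}) of ∫_{ℝ^d×ℝ^d} ‖x − y‖₂^r dπ(x,y) equals ∫_{ℝ^d} min_{1≤i≤n} ‖x − x_i‖₂^r dμ(x). Moreover, the infimum over weights is attained at the Voronoi weights: for any measurable partition C₁, …, C_n of ℝ^d with C_i ⊆ { x : ‖x − x_i‖₂ = dist(x, P_n) } for each i, the weights a_i = μ(C_i) satisfy inf over couplings π of (μ, ∑_i a_i δ_{x_i}) of ∫ ‖x − y‖₂^r dπ(x,y) = ∫ min_i ‖x − x_i‖₂^r dμ(x). -/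
/-!
Every coupling of `μ` with a measure carried by the point set `P` moves each `y` to some point
of `P`, hence at least as far as `dist y P`; integrating gives the lower bound
`∫ dist(y, P)^r dμ ≤ cost`, whatever the weights. Conversely, sending each Voronoi cell `C i`
wholesale to its centre `x i` is a coupling of `μ` with `∑ μ(C i) δ_{x i}` whose cost is exactly
`∫ dist(y, P)^r dμ`, and a measurable Voronoi partition exists by disjointifying the closed
nearest-point cells.
-/

open MeasureTheory Real
open scoped ENNReal NNReal

noncomputable section

open Metric Set

variable {X ι : Type*}

section Measure

variable [MeasurableSpace X] [Fintype ι] {μ : Measure X} {C : ι → Set X}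

theorem sum_restrict_eq_of_partition (hmeas : ∀ i, MeasurableSet (C i))
    (hdisj : Pairwise (Function.onFun Disjoint C)) (hcov : ⋃ i, C i = univ) :
    ∑ i, μ.restrict (C i) = μ := by
  rw [← Measure.sum_fintype, ← Measure.restrict_iUnion hdisj hmeas, hcov, Measure.restrict_univ]

theorem sum_measure_eq_of_partition (hmeas : ∀ i, MeasurableSet (C i))
    (hdisj : Pairwise (Function.onFun Disjoint C)) (hcov : ⋃ i, C i = univ) :
    ∑ i, μ (C i) = μ univ := by
  conv_rhs => rw [← sum_restrict_eq_of_partition (μ := μ) hmeas hdisj hcov]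
  simp only [Measure.coe_finsetSum, Finset.sum_apply, Measure.restrict_apply_univ]

theorem ae_snd_mem_range_of_map_snd_eq [MeasurableSingletonClass X] {T : Measure (X × X)}
    {a : ι → ℝ≥0∞} {x : ι → X} (hT : T.map Prod.snd = ∑ i, a i • Measure.dirac (x i)) :
    ∀ᵐ z ∂T, z.2 ∈ range x := by
  have hmeas : MeasurableSet (range x)ᶜ := (finite_range x).measurableSet.compl
  have hnull : T (Prod.snd ⁻¹' (range x)ᶜ) = 0 := by
    rw [← Measure.map_apply measurable_snd hmeas, hT]
    simp [Measure.dirac_apply' _ hmeas]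
  exact hnull

variable (μ) (C) (x : ι → X)

def partitionCoupling : Measure (X × X) :=
  ∑ i, (μ.restrict (C i)).map fun y => (y, x i)

theorem map_fst_partitionCoupling :
    (partitionCoupling μ C x).map Prod.fst = ∑ i, μ.restrict (C i) := by
  simp only [partitionCoupling, ← Measure.sum_fintype]
  rw [Measure.map_sum measurable_fst.aemeasurable]
  congr! 2 with i
  rw [Measure.map_map measurable_fst measurable_prodMk_right]
  exact Measure.map_id

theorem map_snd_partitionCoupling :
    (partitionCoupling μ C x).map Prod.snd = ∑ i, μ (C i) • Measure.dirac (x i) := by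
  simp only [partitionCoupling, ← Measure.sum_fintype]
  rw [Measure.map_sum measurable_snd.aemeasurable]
  congr! 2 with i
  rw [Measure.map_map measurable_snd measurable_prodMk_right]
  exact (Measure.map_const _ _).trans (by rw [Measure.restrict_apply_univ])

theorem lintegral_partitionCoupling_le (c : X × X → ℝ≥0∞) :
    ∫⁻ z, c z ∂partitionCoupling μ C x ≤ ∑ i, ∫⁻ y in C i, c (y, x i) ∂μ := by
  rw [partitionCoupling, lintegral_finsetSum_measure]
  exact Finset.sum_le_sum fun i _ => lintegral_map_le _ _

end Measure

section Voronoi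

variable [MetricSpace X]

def voronoiCell (x : ι → X) (i : ι) : Set X :=
  {y | dist y (x i) = infDist y (range x)}

theorem isClosed_voronoiCell (x : ι → X) (i : ι) : IsClosed (voronoiCell x i) :=
  isClosed_eq (continuous_id.dist continuous_const) (continuous_infDist_pt _)

theorem iUnion_voronoiCell [Finite ι] [Nonempty ι] (x : ι → X) : ⋃ i, voronoiCell x i = univ := by
  refine eq_univ_of_forall fun y => ?_
  obtain ⟨_, ⟨i, rfl⟩, hi⟩ :=
    (finite_range x).isCompact.exists_infDist_eq_dist (range_nonempty x) y
  exact mem_iUnion.2 ⟨i, hi.symm⟩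

theorem exists_voronoi_partition [MeasurableSpace X] [OpensMeasurableSpace X] [LinearOrder ι]
    [LocallyFiniteOrderBot ι] [Finite ι] [Nonempty ι] (x : ι → X) :
    ∃ C : ι → Set X, (∀ i, MeasurableSet (C i)) ∧ Pairwise (Function.onFun Disjoint C) ∧
      ⋃ i, C i = univ ∧ ∀ i, C i ⊆ voronoiCell x i :=
  ⟨disjointed (voronoiCell x),
    fun i => disjointedRec (fun _ j ht => ht.diff (isClosed_voronoiCell x j).measurableSet)
      (isClosed_voronoiCell x i).measurableSet,
    disjoint_disjointed _, iUnion_disjointed.trans (iUnion_voronoiCell x),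
    disjointed_subset _⟩

end Voronoi

section Transport

variable [MetricSpace X] [MeasurableSpace X]

def transportCost (r : ℝ) (μ ν : Measure X) : ℝ≥0∞ :=
  ⨅ (T : Measure (X × X)) (_ : T.map Prod.fst = μ ∧ T.map Prod.snd = ν),
    ∫⁻ z, ENNReal.ofReal (dist z.1 z.2 ^ r) ∂T

variable [OpensMeasurableSpace X] {r : ℝ}

theorem lintegral_infDist_rpow_le (hr : 0 ≤ r) {S : Set X} {μ : Measure X}
    {T : Measure (X × X)} (hT : T.map Prod.fst = μ) (hS : ∀ᵐ z ∂T, z.2 ∈ S) :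
    ∫⁻ y, ENNReal.ofReal (infDist y S ^ r) ∂μ ≤ ∫⁻ z, ENNReal.ofReal (dist z.1 z.2 ^ r) ∂T := by
  have hmeas : Measurable fun y => ENNReal.ofReal (infDist y S ^ r) :=
    ((continuous_infDist_pt S).rpow_const fun _ => Or.inr hr).measurable.ennreal_ofReal
  rw [← hT, lintegral_map hmeas measurable_fst]
  exact lintegral_mono_ae <| hS.mono fun z hz => ENNReal.ofReal_le_ofReal <|
    Real.rpow_le_rpow infDist_nonneg (infDist_le_dist_of_mem hz) hr

theorem lintegral_infDist_rpow_le_transportCost [Fintype ι] (hr : 0 ≤ r)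
    (μ : Measure X) (x : ι → X) (a : ι → ℝ≥0∞) :
    ∫⁻ y, ENNReal.ofReal (infDist y (range x) ^ r) ∂μ ≤
      transportCost r μ (∑ i, a i • Measure.dirac (x i)) :=
  le_iInf₂ fun _ hT => lintegral_infDist_rpow_le hr hT.1 (ae_snd_mem_range_of_map_snd_eq hT.2)

theorem transportCost_voronoi_eq [Fintype ι] (hr : 0 ≤ r) (μ : Measure X)
    (x : ι → X) {C : ι → Set X} (hmeas : ∀ i, MeasurableSet (C i))
    (hdisj : Pairwise (Function.onFun Disjoint C)) (hcov : ⋃ i, C i = univ)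
    (hcell : ∀ i, C i ⊆ voronoiCell x i) :
    transportCost r μ (∑ i, μ (C i) • Measure.dirac (x i)) =
      ∫⁻ y, ENNReal.ofReal (infDist y (range x) ^ r) ∂μ := by
  refine le_antisymm ?_ (lintegral_infDist_rpow_le_transportCost hr μ x _)
  have hpartition := sum_restrict_eq_of_partition (μ := μ) hmeas hdisj hcov
  refine iInf₂_le_of_le (partitionCoupling μ C x)
    ⟨(map_fst_partitionCoupling μ C x).trans hpartition, map_snd_partitionCoupling μ C x⟩ ?_
  calc _ ≤ ∑ i, ∫⁻ y in C i, ENNReal.ofReal (dist y (x i) ^ r) ∂μ :=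
        lintegral_partitionCoupling_le μ C x fun z => ENNReal.ofReal (dist z.1 z.2 ^ r)
    _ = ∑ i, ∫⁻ y in C i, ENNReal.ofReal (infDist y (range x) ^ r) ∂μ := by
        refine Finset.sum_congr rfl fun i _ => setLIntegral_congr_fun (hmeas i) fun y hy => ?_
        rw [hcell i hy]
    _ = _ := by rw [← lintegral_finsetSum_measure, hpartition]

end Transport

theorem stmt12_general (d n : ℕ) (hn : 1 ≤ n)
    (μ : Measure (EuclideanSpace ℝ (Fin d))) [IsProbabilityMeasure μ]
    (r : ℝ) (hr : 0 < r)
    (x : Fin n → EuclideanSpace ℝ (Fin d)) :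
    -- the doubly-infimized optimal transportation cost equals the distortion:
    (⨅ (a : Fin n → ℝ≥0∞) (_ : ∑ i, a i = 1),
      ⨅ (T : Measure (EuclideanSpace ℝ (Fin d) × EuclideanSpace ℝ (Fin d)))
        (_ : T.map Prod.fst = μ ∧
             T.map Prod.snd = ∑ i, a i • Measure.dirac (x i)),
        ∫⁻ z, ENNReal.ofReal (dist z.1 z.2 ^ r) ∂T) =
      ∫⁻ y, ENNReal.ofReal (Metric.infDist y (Set.range x) ^ r) ∂μ ∧
    -- and the infimum over the weights is attained at the Voronoi weights:
    ∀ C : Fin n → Set (EuclideanSpace ℝ (Fin d)),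
      (∀ i, MeasurableSet (C i)) →
      (Pairwise (Function.onFun Disjoint C)) →
      (⋃ i, C i) = Set.univ →
      (∀ i, C i ⊆ {y | dist y (x i) = Metric.infDist y (Set.range x)}) →
      (⨅ (T : Measure (EuclideanSpace ℝ (Fin d) × EuclideanSpace ℝ (Fin d)))
        (_ : T.map Prod.fst = μ ∧
             T.map Prod.snd = ∑ i, μ (C i) • Measure.dirac (x i)),
        ∫⁻ z, ENNReal.ofReal (dist z.1 z.2 ^ r) ∂T) =
      ∫⁻ y, ENNReal.ofReal (Metric.infDist y (Set.range x) ^ r) ∂μ := by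
  have : NeZero n := ⟨by omega⟩
  have voronoi := fun C hmeas hdisj hcov hcell =>
    transportCost_voronoi_eq (C := C) hr.le μ x hmeas hdisj hcov hcell
  refine ⟨le_antisymm ?_ (le_iInf₂ fun a _ =>
    lintegral_infDist_rpow_le_transportCost hr.le μ x a), voronoi⟩
  obtain ⟨C, hmeas, hdisj, hcov, hcell⟩ := exists_voronoi_partition x
  refine iInf₂_le_of_le (fun i => μ (C i)) ?_ (voronoi C hmeas hdisj hcov hcell).le
  rw [sum_measure_eq_of_partition hmeas hdisj hcov, measure_univ]

theorem stmt12 (d n : ℕ) (hn : 1 ≤ n)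
    (μ : Measure (EuclideanSpace ℝ (Fin d))) [IsProbabilityMeasure μ]
    (hac : μ ≪ volume) (r : ℝ) (hr : 0 < r)
    (x : Fin n → EuclideanSpace ℝ (Fin d)) (hinj : Function.Injective x) :
    -- the doubly-infimized optimal transportation cost equals the distortion:
    (⨅ (a : Fin n → ℝ≥0∞) (_ : ∑ i, a i = 1),
      ⨅ (T : Measure (EuclideanSpace ℝ (Fin d) × EuclideanSpace ℝ (Fin d)))
        (_ : T.map Prod.fst = μ ∧
             T.map Prod.snd = ∑ i, a i • Measure.dirac (x i)),
        ∫⁻ z, ENNReal.ofReal (dist z.1 z.2 ^ r) ∂T) =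
      ∫⁻ y, ENNReal.ofReal (Metric.infDist y (Set.range x) ^ r) ∂μ ∧
    -- and the infimum over the weights is attained at the Voronoi weights:
    ∀ C : Fin n → Set (EuclideanSpace ℝ (Fin d)),
      (∀ i, MeasurableSet (C i)) →
      (Pairwise (Function.onFun Disjoint C)) →
      (⋃ i, C i) = Set.univ →
      (∀ i, C i ⊆ {y | dist y (x i) = Metric.infDist y (Set.range x)}) →
      (⨅ (T : Measure (EuclideanSpace ℝ (Fin d) × EuclideanSpace ℝ (Fin d)))
        (_ : T.map Prod.fst = μ ∧
             T.map Prod.snd = ∑ i, μ (C i) • Measure.dirac (x i)),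
        ∫⁻ z, ENNReal.ofReal (dist z.1 z.2 ^ r) ∂T) =
      ∫⁻ y, ENNReal.ofReal (Metric.infDist y (Set.range x) ^ r) ∂μ :=
  stmt12_general d n hn μ r hr x
end
end
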